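/- arXiv:math/0610983 — 8 statements merged into one kernel-verified Lean document; each statement's English description precedes it below -/
import Mathlib

section
/- Let G be a finite group and g ∈ G. Then g does NOT lie in any solvable normal subgroup of G if and only if there exist an integer n ≥ 1 and elements x₁, …, x_n ∈ G such that the subgroup of G generated by ⁅g,x₁⁆, …, ⁅g,x_n⁆ is not solvable. -/
/-!
The subgroup `K` generated by all commutators `⁅g, y⁆` is normal, since
`c ⁅g, y⁆ c⁻¹ = ⁅g, c⁆⁻¹ ⁅g, c y⁆`, and `g` is central modulo `K`. Hence the preimage of the
centre of `G ⧸ K` is a normal subgroup containing `g`, and it is solvable as soon as `K` is.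
Conversely every `⁅g, y⁆` lies in any normal subgroup containing `g`. So `g` lies in a solvable
normal subgroup iff `K` is solvable, and for finite `G` the subgroup `K` is generated by finitely
many of the `⁅g, y⁆`.
-/

open scoped commutatorElement

namespace Subgroup

variable {G : Type*} [Group G]

theorem isSolvable_of_le {H K : Subgroup G} (hHK : H ≤ K) [Group.IsSolvable K] :
    Group.IsSolvable H :=
  Group.isSolvable_of_isSolvable_injective (inclusion_injective hHK)

theorem isSolvable_comap {G' : Type*} [Group G'] (f : G →* G') (S : Subgroup G')
    [Group.IsSolvable f.ker] [Group.IsSolvable S] : Group.IsSolvable (S.comap f) :=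
  Group.isSolvable_of_ker_le_range (inclusion (ker_le_comap f S)) (f.subgroupComap S) fun x hx =>
    ⟨⟨x, Subtype.ext_iff.mp hx⟩, rfl⟩

instance normal_upperCentralSeriesStep (N : Subgroup G) [N.Normal] :
    (upperCentralSeriesStep N).Normal :=
  upperCentralSeriesStep_eq_comap_center N ▸ inferInstance

instance isSolvable_upperCentralSeriesStep (N : Subgroup G) [N.Normal] [Group.IsSolvable N] :
    Group.IsSolvable (upperCentralSeriesStep N) := by
  have : Group.IsSolvable (QuotientGroup.mk' N).ker := by
    rwa [QuotientGroup.ker_mk']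
  have : Group.IsSolvable (center (G ⧸ N)) :=
    Group.isSolvable_of_comm fun a b => Subtype.ext (mem_center_iff.mp b.2 a)
  rw [upperCentralSeriesStep_eq_comap_center]
  exact isSolvable_comap _ _

theorem commutatorElement_mem_of_left_mem {N : Subgroup G} [N.Normal] {g : G} (hg : g ∈ N)
    (x : G) : ⁅g, x⁆ ∈ N :=
  commutator_le_left N ⊤ (commutator_mem_commutator hg (mem_top x))

def commutatorClosure (g : G) : Subgroup G :=
  closure (Set.range (⁅g, ·⁆))

theorem commutatorClosure_eq_closure_of_surjective {ι : Type*} {x : ι → G}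
    (hx : Function.Surjective x) (g : G) :
    closure (Set.range fun i => ⁅g, x i⁆) = commutatorClosure g := by
  rw [commutatorClosure, ← hx.range_comp]
  rfl

theorem conj_commutatorElement (g c y : G) : c * ⁅g, y⁆ * c⁻¹ = ⁅g, c⁆⁻¹ * ⁅g, c * y⁆ := by
  group

theorem commutatorClosure_eq_normalClosure (g : G) :
    commutatorClosure g = normalClosure (Set.range (⁅g, ·⁆)) := by
  refine le_antisymm closure_le_normalClosure (closure_le _ |>.mpr fun x hx => ?_)
  obtain ⟨_, ⟨y, rfl⟩, hconj⟩ := Group.mem_conjugatesOfSet_iff.mp hx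
  obtain ⟨c, rfl⟩ := isConj_iff.mp hconj
  rw [conj_commutatorElement]
  exact mul_mem (inv_mem (subset_closure ⟨c, rfl⟩)) (subset_closure ⟨c * y, rfl⟩)

instance normal_commutatorClosure (g : G) : (commutatorClosure g).Normal :=
  commutatorClosure_eq_normalClosure g ▸ inferInstance

theorem mem_upperCentralSeriesStep_commutatorClosure (g : G) :
    g ∈ upperCentralSeriesStep (commutatorClosure g) :=
  fun y => subset_closure ⟨y, rfl⟩

theorem commutatorClosure_le_of_mem_normal {N : Subgroup G} [N.Normal] {g : G} (hg : g ∈ N) :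
    commutatorClosure g ≤ N :=
  closure_le _ |>.mpr <| Set.range_subset_iff.mpr (commutatorElement_mem_of_left_mem hg)

theorem exists_normal_isSolvable_mem_iff (g : G) :
    (∃ N : Subgroup G, N.Normal ∧ Group.IsSolvable N ∧ g ∈ N) ↔
      Group.IsSolvable (commutatorClosure g) := by
  constructor
  · rintro ⟨N, _, _, hg⟩
    exact isSolvable_of_le (commutatorClosure_le_of_mem_normal hg)
  · intro _
    exact ⟨_, inferInstance, inferInstance, mem_upperCentralSeriesStep_commutatorClosure g⟩

end Subgroup

/-- In a finite group `G`, an element `g` lies in no solvable normal subgroup of `G`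
iff there exist `n ≥ 1` and `x₁, …, xₙ ∈ G` such that the subgroup generated by
`⁅g,x₁⁆, …, ⁅g,xₙ⁆` is not solvable. -/
theorem not_mem_solvable_radical_iff {G : Type*} [Group G] [Finite G] (g : G) :
    (¬ ∃ N : Subgroup G, N.Normal ∧ IsSolvable N ∧ g ∈ N) ↔
      ∃ (n : ℕ), 1 ≤ n ∧ ∃ x : Fin n → G,
        ¬ IsSolvable (Subgroup.closure (Set.range fun i : Fin n => ⁅g, x i⁆)) := by
  refine (not_congr (Subgroup.exists_normal_isSolvable_mem_iff g)).trans ⟨?_, ?_⟩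
  · intro h
    let e := (Finite.equivFin G).symm
    refine ⟨Nat.card G, Nat.card_pos, e, ?_⟩
    rwa [Subgroup.commutatorClosure_eq_closure_of_surjective e.surjective]
  · rintro ⟨n, -, x, hx⟩ hg
    have hle : Subgroup.closure (Set.range fun i => ⁅g, x i⁆) ≤ Subgroup.commutatorClosure g :=
      Subgroup.closure_mono (Set.range_subset_iff.mpr fun i => ⟨x i, rfl⟩)
    exact hx (Subgroup.isSolvable_of_le hle)
end

section
/- Let G = A_n be the alternating group on n letters with n ≥ 5. Then for every g ∈ G with g ≠ 1 there exist x₁, x₂ ∈ G such that the subgroup of G generated by the commutators ⁅g,x₁⁆ and ⁅g,x₂⁆ is not solvable (i.e., κ(A_n) = 2). -/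
set_option maxRecDepth 20000

open Equiv Equiv.Perm Subgroup

open scoped commutatorElement




theorem notSolvable_of_cert {G : Type*} [Group G] (H : Subgroup G)
    (u a b : G) (hu : u ≠ 1) (hmu : u ∈ H) (hma : a ∈ H) (hmb : b ∈ H)
    (hrel : ⁅a * u * a⁻¹, b * u * b⁻¹⁆ = u) : ¬ IsSolvable H := by
  set U : H := ⟨u, hmu⟩ with hU
  set A : H := ⟨a, hma⟩ with hA
  set B : H := ⟨b, hmb⟩ with hB
  have hrel' : ⁅A * U * A⁻¹, B * U * B⁻¹⁆ = U := by
    apply Subtype.ext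
    simpa [commutatorElement_def] using hrel
  have hU1 : U ≠ 1 := fun h => hu (congrArg Subtype.val h)
  refine not_solvable_of_mem_derivedSeries hU1 fun k => ?_
  induction k with
  | zero => exact mem_top U
  | succ k ih =>
      rw [derivedSeries_succ, ← hrel']
      exact commutator_mem_commutator
        ((derivedSeries_normal _ _).conj_mem U ih A)
        ((derivedSeries_normal _ _).conj_mem U ih B)

theorem notSolvable_closure_map {G G' : Type*} [Group G] [Group G'] (ψ : G →* G')
    (hψ : Function.Injective ψ) {c₁ c₂ : G}
    (h : ¬ IsSolvable (Subgroup.closure ({c₁, c₂} : Set G))) :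
    ¬ IsSolvable (Subgroup.closure ({ψ c₁, ψ c₂} : Set G')) := by
  intro hs
  apply h
  have he : Subgroup.closure ({ψ c₁, ψ c₂} : Set G')
      = (Subgroup.closure ({c₁, c₂} : Set G)).map ψ := by
    rw [MonoidHom.map_closure, Set.image_pair]
  rw [he] at hs
  haveI := hs
  exact @solvable_of_solvable_injective _ _ _ _
    (((Subgroup.closure ({c₁, c₂} : Set G)).equivMapOfInjective ψ hψ).toMonoidHom) ((Subgroup.closure ({c₁, c₂} : Set G)).equivMapOfInjective ψ hψ).injective hs



noncomputable def viaHom {k n : ℕ} (f : Fin k ↪ Fin n) : Perm (Fin k) →* Perm (Fin n) :=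
  Perm.viaEmbeddingHom f

theorem viaHom_eq {k n : ℕ} (f : Fin k ↪ Fin n) (x : Perm (Fin k)) :
    viaHom f x = x.viaEmbedding f := rfl

theorem viaHom_inj {k n : ℕ} (f : Fin k ↪ Fin n) : Function.Injective (viaHom f) :=
  Perm.viaEmbeddingHom_injective f

theorem viaHom_sign {k n : ℕ} (f : Fin k ↪ Fin n) (x : Perm (Fin k)) :
    Perm.sign (viaHom f x) = Perm.sign x := by
  have h : viaHom f x = x.viaFintypeEmbedding f := by
    refine Equiv.ext fun b => ?_
    by_cases hb : b ∈ Set.range f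
    · obtain ⟨i, rfl⟩ := hb
      rw [viaHom_eq, Perm.viaEmbedding_apply, Perm.viaFintypeEmbedding_apply_image]
    · rw [viaHom_eq, Perm.viaEmbedding_apply_of_notMem _ _ _ hb,
        Perm.viaFintypeEmbedding_apply_notMem_range _ _ hb]
  rw [h, Perm.viaFintypeEmbedding_sign]

theorem conj_viaHom {n k : ℕ} (P : Perm (Fin n)) (f : Fin k ↪ Fin n) (M : Perm (Fin k))
    (D : Finset (Fin k)) (hgf : ∀ i ∈ D, P (f i) = f (M i))
    (x : Perm (Fin k)) (hx : ∀ i ∉ D, x i = i) :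
    P * viaHom f x * P⁻¹ = viaHom f (M * x * M⁻¹) := by
  have hxD : ∀ i, i ∈ D → x i ∈ D := by
    intro i hi
    by_contra hxi
    have h2 : x (x i) = x i := hx _ hxi
    have h3 : x i = i := x.injective h2
    rw [h3] at hxi; exact hxi hi
  have key : ∀ j, M⁻¹ j ∈ D → f j = P (f (M⁻¹ j)) := by
    intro j hj
    rw [hgf _ hj, ← Perm.mul_apply, mul_inv_cancel, Perm.one_apply]
  rw [mul_inv_eq_iff_eq_mul]
  refine Equiv.ext fun b => ?_
  simp only [Perm.mul_apply, viaHom_eq]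
  by_cases hb : b ∈ Set.range f
  · obtain ⟨i, rfl⟩ := hb
    by_cases hi : i ∈ D
    · rw [Perm.viaEmbedding_apply, hgf i hi, hgf (x i) (hxD i hi), Perm.viaEmbedding_apply]
      congr 1
      simp [Perm.mul_apply]
    · rw [Perm.viaEmbedding_apply, hx i hi]
      by_cases hPb : P (f i) ∈ Set.range f
      · obtain ⟨j, hj⟩ := hPb
        rw [← hj, Perm.viaEmbedding_apply]
        have hjD : M⁻¹ j ∉ D := by
          intro hmem
          have := key j hmem
          rw [hj] at this
          exact hi ((f.injective (P.injective this)) ▸ hmem)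
        have : (M * x * M⁻¹) j = j := by
          simp only [Perm.mul_apply]
          rw [hx _ hjD, ← Perm.mul_apply, mul_inv_cancel, Perm.one_apply]
        rw [this]
      · rw [Perm.viaEmbedding_apply_of_notMem _ _ _ hPb]
  · rw [Perm.viaEmbedding_apply_of_notMem _ _ _ hb]
    by_cases hPb : P b ∈ Set.range f
    · obtain ⟨j, hj⟩ := hPb
      rw [← hj, Perm.viaEmbedding_apply]
      have hjD : M⁻¹ j ∉ D := by
        intro hmem
        have := key j hmem
        rw [hj] at this
        exact hb ⟨M⁻¹ j, P.injective this.symm ▸ rfl⟩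
      have : (M * x * M⁻¹) j = j := by
        simp only [Perm.mul_apply]
        rw [hx _ hjD, ← Perm.mul_apply, mul_inv_cancel, Perm.one_apply]
      rw [this]
    · rw [Perm.viaEmbedding_apply_of_notMem _ _ _ hPb]


section configs

theorem mem2L {G : Type*} [Group G] (c1 c2 : G) : c1 ∈ Subgroup.closure ({c1, c2} : Set G) :=
  subset_closure (by simp)
theorem mem2R {G : Type*} [Group G] (c1 c2 : G) : c2 ∈ Subgroup.closure ({c1, c2} : Set G) :=
  subset_closure (by simp)


def MA : Perm (Fin 5) := c[0,1,2,3,4]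
def xA1 : Perm (Fin 5) := c[0,1,3]
def xA2 : Perm (Fin 5) := c[0,3,1]

theorem nsA' : ¬ IsSolvable (Subgroup.closure
    ({(c[0,3,2,4,1] : Perm (Fin 5)), c[0,4,2,1,3]} : Set (Perm (Fin 5)))) := by
  have h1 := mem2L (c[0,3,2,4,1] : Perm (Fin 5)) (c[0,4,2,1,3])
  have h2 := mem2R (c[0,3,2,4,1] : Perm (Fin 5)) (c[0,4,2,1,3])
  refine notSolvable_of_cert _ (c[0,3,2,4,1]) (c[0,4,2,1,3]) (c[0,2,3,4,1]) (by decide) ?_ ?_ ?_ ?_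
  · have hw : (c[0,3,2,4,1]) = (c[0,3,2,4,1] : Perm (Fin 5)) := by decide
    rw [← hw]; exact h1
  · have hw : (c[0,4,2,1,3]) = (c[0,4,2,1,3] : Perm (Fin 5)) := by decide
    rw [← hw]; exact h2
  · have hw : (c[0,4,2,1,3])*(c[0,4,2,1,3]) = (c[0,2,3,4,1] : Perm (Fin 5)) := by decide
    rw [← hw]; exact mul_mem h2 h2
  · have e1 : (c[0,4,2,1,3] : Perm (Fin 5)) * (c[0,3,2,4,1]) * (c[0,4,2,1,3])⁻¹ = c[0,1,2,3,4] := by decide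
    have e2 : (c[0,2,3,4,1] : Perm (Fin 5)) * (c[0,3,2,4,1]) * (c[0,2,3,4,1])⁻¹ = c[0,2,4,3,1] := by decide
    rw [commutatorElement_def, e1, e2]
    decide

theorem nsA : ¬ IsSolvable (Subgroup.closure
    ({MA * xA1 * MA⁻¹ * xA1⁻¹, MA * xA2 * MA⁻¹ * xA2⁻¹} : Set (Perm (Fin 5)))) := by
  have h1 : MA * xA1 * MA⁻¹ * xA1⁻¹ = (c[0,3,2,4,1] : Perm (Fin 5)) := by
    rw [MA, xA1]; decide
  have h2 : MA * xA2 * MA⁻¹ * xA2⁻¹ = (c[0,4,2,1,3] : Perm (Fin 5)) := by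
    rw [MA, xA2]; decide
  rw [h1, h2]
  exact nsA'

theorem sgnA1 : Perm.sign xA1 = 1 := by rw [xA1]; decide
theorem sgnA2 : Perm.sign xA2 = 1 := by rw [xA2]; decide


def MB : Perm (Fin 5) := c[0,1,2]
def xB1 : Perm (Fin 5) := c[2,3,4]
def xB2 : Perm (Fin 5) := c[1,2,4]

theorem nsB' : ¬ IsSolvable (Subgroup.closure
    ({(c[0,3,2] : Perm (Fin 5)), c[0,4] * c[1,2]} : Set (Perm (Fin 5)))) := by
  have h1 := mem2L (c[0,3,2] : Perm (Fin 5)) (c[0,4] * c[1,2])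
  have h2 := mem2R (c[0,3,2] : Perm (Fin 5)) (c[0,4] * c[1,2])
  refine notSolvable_of_cert _ (c[0,2,4,3,1]) (c[0,3,2]) (c[0,4] * c[1,2]) (by decide) ?_ ?_ ?_ ?_
  · have hw : (c[0,3,2])*(c[0,4] * c[1,2])*(c[0,3,2]) = (c[0,2,4,3,1] : Perm (Fin 5)) := by decide
    rw [← hw]; exact mul_mem (mul_mem h1 h2) h1
  · have hw : (c[0,3,2]) = (c[0,3,2] : Perm (Fin 5)) := by decide
    rw [← hw]; exact h1
  · have hw : (c[0,4] * c[1,2]) = (c[0,4] * c[1,2] : Perm (Fin 5)) := by decide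
    rw [← hw]; exact h2
  · have e1 : (c[0,3,2] : Perm (Fin 5)) * (c[0,2,4,3,1]) * (c[0,3,2])⁻¹ = c[0,4,2,1,3] := by decide
    have e2 : (c[0,4] * c[1,2] : Perm (Fin 5)) * (c[0,2,4,3,1]) * (c[0,4] * c[1,2])⁻¹ = c[0,3,2,4,1] := by decide
    rw [commutatorElement_def, e1, e2]
    decide

theorem nsB : ¬ IsSolvable (Subgroup.closure
    ({MB * xB1 * MB⁻¹ * xB1⁻¹, MB * xB2 * MB⁻¹ * xB2⁻¹} : Set (Perm (Fin 5)))) := by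
  have h1 : MB * xB1 * MB⁻¹ * xB1⁻¹ = (c[0,3,2] : Perm (Fin 5)) := by
    rw [MB, xB1]; decide
  have h2 : MB * xB2 * MB⁻¹ * xB2⁻¹ = (c[0,4] * c[1,2] : Perm (Fin 5)) := by
    rw [MB, xB2]; decide
  rw [h1, h2]
  exact nsB'

theorem sgnB1 : Perm.sign xB1 = 1 := by rw [xB1]; decide
theorem sgnB2 : Perm.sign xB2 = 1 := by rw [xB2]; decide


def MC : Perm (Fin 5) := Equiv.swap 0 1 * Equiv.swap 2 3
def xC1 : Perm (Fin 5) := c[2,3,4]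
def xC2 : Perm (Fin 5) := c[1,2,3]

theorem nsC' : ¬ IsSolvable (Subgroup.closure
    ({(c[2,3,4] : Perm (Fin 5)), c[0,3] * c[1,2]} : Set (Perm (Fin 5)))) := by
  have h1 := mem2L (c[2,3,4] : Perm (Fin 5)) (c[0,3] * c[1,2])
  have h2 := mem2R (c[2,3,4] : Perm (Fin 5)) (c[0,3] * c[1,2])
  refine notSolvable_of_cert _ (c[0,4,1,3,2]) (c[2,3,4]) (c[0,3] * c[1,2]) (by decide) ?_ ?_ ?_ ?_
  · have hw : (c[2,3,4])*(c[0,3] * c[1,2])*(c[2,3,4]) = (c[0,4,1,3,2] : Perm (Fin 5)) := by decide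
    rw [← hw]; exact mul_mem (mul_mem h1 h2) h1
  · have hw : (c[2,3,4]) = (c[2,3,4] : Perm (Fin 5)) := by decide
    rw [← hw]; exact h1
  · have hw : (c[0,3] * c[1,2]) = (c[0,3] * c[1,2] : Perm (Fin 5)) := by decide
    rw [← hw]; exact h2
  · have e1 : (c[2,3,4] : Perm (Fin 5)) * (c[0,4,1,3,2]) * (c[2,3,4])⁻¹ = c[0,2,1,4,3] := by decide
    have e2 : (c[0,3] * c[1,2] : Perm (Fin 5)) * (c[0,4,1,3,2]) * (c[0,3] * c[1,2])⁻¹ = c[0,1,3,4,2] := by decide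
    rw [commutatorElement_def, e1, e2]
    decide

theorem nsC : ¬ IsSolvable (Subgroup.closure
    ({MC * xC1 * MC⁻¹ * xC1⁻¹, MC * xC2 * MC⁻¹ * xC2⁻¹} : Set (Perm (Fin 5)))) := by
  have h1 : MC * xC1 * MC⁻¹ * xC1⁻¹ = (c[2,3,4] : Perm (Fin 5)) := by
    rw [MC, xC1]; decide
  have h2 : MC * xC2 * MC⁻¹ * xC2⁻¹ = (c[0,3] * c[1,2] : Perm (Fin 5)) := by
    rw [MC, xC2]; decide
  rw [h1, h2]
  exact nsC'

theorem sgnC1 : Perm.sign xC1 = 1 := by rw [xC1]; decide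
theorem sgnC2 : Perm.sign xC2 = 1 := by rw [xC2]; decide


def MD : Perm (Fin 8) := Equiv.swap 0 1 * Equiv.swap 2 3 * Equiv.swap 4 5 * Equiv.swap 6 7
def xD1 : Perm (Fin 8) := c[3,4,6]
def xD2 : Perm (Fin 8) := c[1,2,4]

theorem nsD' : ¬ IsSolvable (Subgroup.closure
    ({(c[2,5,7] * c[3,6,4] : Perm (Fin 8)), c[0,3,5] * c[1,4,2]} : Set (Perm (Fin 8)))) := by
  have h1 := mem2L (c[2,5,7] * c[3,6,4] : Perm (Fin 8)) (c[0,3,5] * c[1,4,2])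
  have h2 := mem2R (c[2,5,7] * c[3,6,4] : Perm (Fin 8)) (c[0,3,5] * c[1,4,2])
  refine notSolvable_of_cert _ (c[0,4,2] * c[1,6,7]) (c[0,5,3] * c[1,2,4]) (c[0,1,6] * c[3,4,7]) (by decide) ?_ ?_ ?_ ?_
  · have hw : (c[2,5,7] * c[3,6,4])⁻¹*(c[0,3,5] * c[1,4,2])*(c[2,5,7] * c[3,6,4]) = (c[0,4,2] * c[1,6,7] : Perm (Fin 8)) := by decide
    rw [← hw]; exact mul_mem (mul_mem (inv_mem h1) h2) h1
  · have hw : (c[0,3,5] * c[1,4,2])⁻¹ = (c[0,5,3] * c[1,2,4] : Perm (Fin 8)) := by decide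
    rw [← hw]; exact inv_mem h2
  · have hw : (c[0,3,5] * c[1,4,2])⁻¹*(c[2,5,7] * c[3,6,4])⁻¹*(c[0,3,5] * c[1,4,2]) = (c[0,1,6] * c[3,4,7] : Perm (Fin 8)) := by decide
    rw [← hw]; exact mul_mem (mul_mem (inv_mem h2) (inv_mem h1)) h2
  · have e1 : (c[0,5,3] * c[1,2,4] : Perm (Fin 8)) * (c[0,4,2] * c[1,6,7]) * (c[0,5,3] * c[1,2,4])⁻¹ = c[1,4,5] * c[2,6,7] := by decide
    have e2 : (c[0,1,6] * c[3,4,7] : Perm (Fin 8)) * (c[0,4,2] * c[1,6,7]) * (c[0,1,6] * c[3,4,7])⁻¹ = c[0,3,6] * c[1,7,2] := by decide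
    rw [commutatorElement_def, e1, e2]
    decide

theorem nsD : ¬ IsSolvable (Subgroup.closure
    ({MD * xD1 * MD⁻¹ * xD1⁻¹, MD * xD2 * MD⁻¹ * xD2⁻¹} : Set (Perm (Fin 8)))) := by
  have h1 : MD * xD1 * MD⁻¹ * xD1⁻¹ = (c[2,5,7] * c[3,6,4] : Perm (Fin 8)) := by
    rw [MD, xD1]; decide
  have h2 : MD * xD2 * MD⁻¹ * xD2⁻¹ = (c[0,3,5] * c[1,4,2] : Perm (Fin 8)) := by
    rw [MD, xD2]; decide
  rw [h1, h2]
  exact nsD'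

theorem sgnD1 : Perm.sign xD1 = 1 := by rw [xD1]; decide
theorem sgnD2 : Perm.sign xD2 = 1 := by rw [xD2]; decide


end configs

theorem master {n k : ℕ} (g : alternatingGroup (Fin n)) (f : Fin k ↪ Fin n)
    (M x₁ x₂ : Perm (Fin k)) (D : Finset (Fin k))
    (hgf : ∀ i ∈ D, (g : Perm (Fin n)) (f i) = f (M i))
    (hx₁ : ∀ i ∉ D, x₁ i = i) (hx₂ : ∀ i ∉ D, x₂ i = i)
    (hs₁ : Perm.sign x₁ = 1) (hs₂ : Perm.sign x₂ = 1)
    (hns : ¬ IsSolvable (Subgroup.closure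
      ({M * x₁ * M⁻¹ * x₁⁻¹, M * x₂ * M⁻¹ * x₂⁻¹} : Set (Perm (Fin k))))) :
    ∃ y₁ y₂ : alternatingGroup (Fin n),
      ¬ IsSolvable (Subgroup.closure
        ({⁅g, y₁⁆, ⁅g, y₂⁆} : Set (alternatingGroup (Fin n)))) := by
  have hmem : ∀ x : Perm (Fin k), Perm.sign x = 1 → viaHom f x ∈ alternatingGroup (Fin n) := by
    intro x hx
    rw [Perm.mem_alternatingGroup, viaHom_sign]
    exact hx
  have hc : ∀ (x : Perm (Fin k)), (∀ i ∉ D, x i = i) →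
      ⁅(g : Perm (Fin n)), viaHom f x⁆ = viaHom f (M * x * M⁻¹ * x⁻¹) := by
    intro x hx
    have h1 := conj_viaHom (g : Perm (Fin n)) f M D hgf x hx
    rw [commutatorElement_def]
    calc (g : Perm (Fin n)) * viaHom f x * (g : Perm (Fin n))⁻¹ * (viaHom f x)⁻¹
        = viaHom f (M * x * M⁻¹) * (viaHom f x)⁻¹ := by rw [h1]
      _ = viaHom f (M * x * M⁻¹ * x⁻¹) := by rw [← map_inv, ← map_mul]
  refine ⟨⟨viaHom f x₁, hmem x₁ hs₁⟩, ⟨viaHom f x₂, hmem x₂ hs₂⟩, ?_⟩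
  set y₁ : alternatingGroup (Fin n) := ⟨viaHom f x₁, hmem x₁ hs₁⟩
  set y₂ : alternatingGroup (Fin n) := ⟨viaHom f x₂, hmem x₂ hs₂⟩
  intro hsol
  have him1 : (alternatingGroup (Fin n)).subtype ⁅g, y₁⁆ = viaHom f (M * x₁ * M⁻¹ * x₁⁻¹) :=
    hc x₁ hx₁
  have him2 : (alternatingGroup (Fin n)).subtype ⁅g, y₂⁆ = viaHom f (M * x₂ * M⁻¹ * x₂⁻¹) :=
    hc x₂ hx₂
  have hmap : (Subgroup.closure ({⁅g, y₁⁆, ⁅g, y₂⁆} : Set (alternatingGroup (Fin n)))).map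
        (alternatingGroup (Fin n)).subtype
      = Subgroup.closure ({viaHom f (M * x₁ * M⁻¹ * x₁⁻¹),
          viaHom f (M * x₂ * M⁻¹ * x₂⁻¹)} : Set (Perm (Fin n))) := by
    rw [MonoidHom.map_closure]
    congr 1
    rw [Set.image_pair, him1, him2]
  have hsol' : IsSolvable ((Subgroup.closure
      ({⁅g, y₁⁆, ⁅g, y₂⁆} : Set (alternatingGroup (Fin n)))).map
        (alternatingGroup (Fin n)).subtype) := by
    have eqv := (Subgroup.closure
      ({⁅g, y₁⁆, ⁅g, y₂⁆} : Set (alternatingGroup (Fin n)))).equivMapOfInjective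
        (alternatingGroup (Fin n)).subtype (alternatingGroup (Fin n)).subtype_injective
    haveI := hsol
    exact @solvable_of_solvable_injective _ _ _ _ (eqv.symm.toMonoidHom) eqv.symm.injective hsol
  rw [hmap] at hsol'
  exact notSolvable_closure_map (viaHom f) (viaHom_inj f) hns hsol'


theorem caseA {n : ℕ} (g : alternatingGroup (Fin n)) (p q r s w : Fin n)
    (h01 : p ≠ q) (h02 : p ≠ r) (h03 : p ≠ s) (h04 : p ≠ w)
    (h12 : q ≠ r) (h13 : q ≠ s) (h14 : q ≠ w)
    (h23 : r ≠ s) (h24 : r ≠ w) (h34 : s ≠ w)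
    (e1 : (g : Perm (Fin n)) p = q) (e2 : (g : Perm (Fin n)) q = r)
    (e3 : (g : Perm (Fin n)) s = w) :
    ∃ y₁ y₂ : alternatingGroup (Fin n),
      ¬ IsSolvable (Subgroup.closure
        ({⁅g, y₁⁆, ⁅g, y₂⁆} : Set (alternatingGroup (Fin n)))) := by
  have hinj : Function.Injective ![p,q,r,s,w] := by
    intro i j hij
    fin_cases i <;> fin_cases j <;> simp_all
  refine master g ⟨![p,q,r,s,w], hinj⟩ MA xA1 xA2 ({0,1,3} : Finset (Fin 5)) ?_
    (by decide) (by decide) (by decide) (by decide) nsA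
  intro i hi
  fin_cases hi
  · simpa [show MA 0 = 1 by decide, show MA 1 = 2 by decide, show MA 3 = 4 by decide, Function.Embedding.coeFn_mk] using e1
  · simpa [show MA 0 = 1 by decide, show MA 1 = 2 by decide, show MA 3 = 4 by decide] using e2
  · simpa [show MA 0 = 1 by decide, show MA 1 = 2 by decide, show MA 3 = 4 by decide] using e3


theorem caseB {n : ℕ} (g : alternatingGroup (Fin n)) (p q r z z' : Fin n)
    (h01 : p ≠ q) (h02 : p ≠ r) (h03 : p ≠ z) (h04 : p ≠ z')
    (h12 : q ≠ r) (h13 : q ≠ z) (h14 : q ≠ z')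
    (h23 : r ≠ z) (h24 : r ≠ z') (h34 : z ≠ z')
    (e1 : (g : Perm (Fin n)) p = q) (e2 : (g : Perm (Fin n)) q = r)
    (e3 : (g : Perm (Fin n)) r = p) (e4 : (g : Perm (Fin n)) z = z)
    (e5 : (g : Perm (Fin n)) z' = z') :
    ∃ y₁ y₂ : alternatingGroup (Fin n),
      ¬ IsSolvable (Subgroup.closure
        ({⁅g, y₁⁆, ⁅g, y₂⁆} : Set (alternatingGroup (Fin n)))) := by
  have hinj : Function.Injective ![p,q,r,z,z'] := by
    intro i j hij
    fin_cases i <;> fin_cases j <;> simp_all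
  refine master g ⟨![p,q,r,z,z'], hinj⟩ MB xB1 xB2 (Finset.univ) ?_
    (fun i hi => absurd (Finset.mem_univ i) hi)
    (fun i hi => absurd (Finset.mem_univ i) hi) (by decide) (by decide) nsB
  intro i _
  fin_cases i
  · simpa [show MB 0 = 1 by decide, show MB 1 = 2 by decide, show MB 2 = 0 by decide, show MB 3 = 3 by decide, show MB 4 = 4 by decide] using e1
  · simpa [show MB 0 = 1 by decide, show MB 1 = 2 by decide, show MB 2 = 0 by decide, show MB 3 = 3 by decide, show MB 4 = 4 by decide] using e2
  · simpa [show MB 0 = 1 by decide, show MB 1 = 2 by decide, show MB 2 = 0 by decide, show MB 3 = 3 by decide, show MB 4 = 4 by decide] using e3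
  · simpa [show MB 0 = 1 by decide, show MB 1 = 2 by decide, show MB 2 = 0 by decide, show MB 3 = 3 by decide, show MB 4 = 4 by decide] using e4
  · simpa [show MB 0 = 1 by decide, show MB 1 = 2 by decide, show MB 2 = 0 by decide, show MB 3 = 3 by decide, show MB 4 = 4 by decide] using e5

theorem caseC {n : ℕ} (g : alternatingGroup (Fin n)) (a b c d z : Fin n)
    (h01 : a ≠ b) (h02 : a ≠ c) (h03 : a ≠ d) (h04 : a ≠ z)
    (h12 : b ≠ c) (h13 : b ≠ d) (h14 : b ≠ z)
    (h23 : c ≠ d) (h24 : c ≠ z) (h34 : d ≠ z)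
    (e1 : (g : Perm (Fin n)) a = b) (e2 : (g : Perm (Fin n)) b = a)
    (e3 : (g : Perm (Fin n)) c = d) (e4 : (g : Perm (Fin n)) d = c)
    (e5 : (g : Perm (Fin n)) z = z) :
    ∃ y₁ y₂ : alternatingGroup (Fin n),
      ¬ IsSolvable (Subgroup.closure
        ({⁅g, y₁⁆, ⁅g, y₂⁆} : Set (alternatingGroup (Fin n)))) := by
  have hinj : Function.Injective ![a,b,c,d,z] := by
    intro i j hij
    fin_cases i <;> fin_cases j <;> simp_all
  refine master g ⟨![a,b,c,d,z], hinj⟩ MC xC1 xC2 (Finset.univ) ?_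
    (fun i hi => absurd (Finset.mem_univ i) hi)
    (fun i hi => absurd (Finset.mem_univ i) hi) (by decide) (by decide) nsC
  intro i _
  fin_cases i
  · simpa [MC, Equiv.swap_apply_of_ne_of_ne] using e1
  · simpa [MC, Equiv.swap_apply_of_ne_of_ne] using e2
  · simpa [MC, Equiv.swap_apply_of_ne_of_ne] using e3
  · simpa [MC, Equiv.swap_apply_of_ne_of_ne] using e4
  · simpa [MC, Equiv.swap_apply_of_ne_of_ne] using e5

theorem caseD {n : ℕ} (g : alternatingGroup (Fin n)) (a b c d u v w z : Fin n)
    (h01 : a ≠ b) (h02 : a ≠ c) (h03 : a ≠ d) (h04 : a ≠ u) (h05 : a ≠ v) (h06 : a ≠ w) (h07 : a ≠ z)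
    (h12 : b ≠ c) (h13 : b ≠ d) (h14 : b ≠ u) (h15 : b ≠ v) (h16 : b ≠ w) (h17 : b ≠ z)
    (h23 : c ≠ d) (h24 : c ≠ u) (h25 : c ≠ v) (h26 : c ≠ w) (h27 : c ≠ z)
    (h34 : d ≠ u) (h35 : d ≠ v) (h36 : d ≠ w) (h37 : d ≠ z)
    (h45 : u ≠ v) (h46 : u ≠ w) (h47 : u ≠ z)
    (h56 : v ≠ w) (h57 : v ≠ z)
    (h67 : w ≠ z)
    (e1 : (g : Perm (Fin n)) a = b) (e2 : (g : Perm (Fin n)) b = a)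
    (e3 : (g : Perm (Fin n)) c = d) (e4 : (g : Perm (Fin n)) d = c)
    (e5 : (g : Perm (Fin n)) u = v) (e6 : (g : Perm (Fin n)) v = u)
    (e7 : (g : Perm (Fin n)) w = z) (e8 : (g : Perm (Fin n)) z = w) :
    ∃ y₁ y₂ : alternatingGroup (Fin n),
      ¬ IsSolvable (Subgroup.closure
        ({⁅g, y₁⁆, ⁅g, y₂⁆} : Set (alternatingGroup (Fin n)))) := by
  have m5 : ![a,b,c,d,u,v,w,z] (5 : Fin 8) = v := rfl
  have m6 : ![a,b,c,d,u,v,w,z] (6 : Fin 8) = w := rfl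
  have m7 : ![a,b,c,d,u,v,w,z] (7 : Fin 8) = z := rfl
  have hinj : Function.Injective ![a,b,c,d,u,v,w,z] := by
    intro i j hij
    fin_cases i <;> fin_cases j <;> simp_all
  refine master g ⟨![a,b,c,d,u,v,w,z], hinj⟩ MD xD1 xD2 (Finset.univ) ?_
    (fun i hi => absurd (Finset.mem_univ i) hi)
    (fun i hi => absurd (Finset.mem_univ i) hi) (by decide) (by decide) nsD
  intro i _
  fin_cases i
  · exact e1
  · exact e2
  · exact e3
  · exact e4
  · exact e5
  · exact e6
  · exact e7
  · exact e8


-- helper: find a point outside a small finset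
theorem exists_outside {n : ℕ} (s : Finset (Fin n)) (h : s.card < n) :
    ∃ z : Fin n, z ∉ s := by
  by_contra hcon
  push_neg at hcon
  have : (Finset.univ : Finset (Fin n)) ⊆ s := fun x _ => hcon x
  have := Finset.card_le_card this
  simp [Finset.card_univ] at this
  omega

theorem exists_two_outside {n : ℕ} (s : Finset (Fin n)) (h : s.card + 1 < n) :
    ∃ z z', z ≠ z' ∧ z ∉ s ∧ z' ∉ s := by
  obtain ⟨z, hz⟩ := exists_outside s (by omega)
  obtain ⟨z', hz'⟩ := exists_outside (insert z s) (by
    have := Finset.card_insert_le z s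
    omega)
  refine ⟨z, z', ?_, hz, ?_⟩
  · intro hzz; exact hz' (hzz ▸ Finset.mem_insert_self z s)
  · intro hmem; exact hz' (Finset.mem_insert_of_mem hmem)

/-- For the alternating group `Aₙ` with `n ≥ 5`: for every `g ≠ 1` there exist
`x₁, x₂` such that the subgroup generated by `⁅g,x₁⁆` and `⁅g,x₂⁆` is not solvable
(i.e. `κ(Aₙ) = 2`). -/
theorem alternatingGroup_kappa_two (n : ℕ) (hn : 5 ≤ n)
    (g : alternatingGroup (Fin n)) (hg : g ≠ 1) :
    ∃ x₁ x₂ : alternatingGroup (Fin n),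
      ¬ IsSolvable (Subgroup.closure
        ({⁅g, x₁⁆, ⁅g, x₂⁆} : Set (alternatingGroup (Fin n)))) := by
  set P : Perm (Fin n) := (g : Perm (Fin n)) with hPdef
  have hsg : Perm.sign P = 1 := Perm.mem_alternatingGroup.mp g.2
  have hP1 : P ≠ 1 := by
    intro h
    exact hg (Subtype.ext h)
  obtain ⟨a₀, ha₀⟩ : ∃ a, P a ≠ a := by
    by_contra hcon
    push_neg at hcon
    exact hP1 (Equiv.ext hcon)
  by_cases h3 : ∃ p, P p ≠ p ∧ P (P p) ≠ p
  · -- there is a cycle of length ≥ 3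
    obtain ⟨p, hp1, hp2⟩ := h3
    set q := P p with hq
    set r := P q with hr
    have hqp : q ≠ p := hp1
    have hrp : r ≠ p := hp2
    have hrq : r ≠ q := fun h => hqp (P.injective ((hr.symm.trans h).trans hq))
    by_cases hs : ∃ s, P s ≠ s ∧ s ≠ p ∧ s ≠ q ∧ s ≠ r ∧ P s ≠ p ∧ P s ≠ q ∧ P s ≠ r
    · obtain ⟨s, hs1, hs2, hs3, hs4, hs5, hs6, hs7⟩ := hs
      exact caseA g p q r s (P s)
        hqp.symm hrp.symm hs2.symm (fun h => hs5 h.symm)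
        hrq.symm hs3.symm (fun h => hs6 h.symm)
        hs4.symm (fun h => hs7 h.symm) (fun h => hs1 h.symm)
        hq.symm hr.symm rfl
    · -- no such s
      have hout : ∀ s, P s ≠ s → s ≠ p → s ≠ q → s ≠ r →
          P s = p ∨ P s = q ∨ P s = r := by
        intro s h1 h2 h3' h4
        by_contra hcon
        push_neg at hcon
        exact hs ⟨s, h1, h2, h3', h4, hcon.1, hcon.2.1, hcon.2.2⟩
      have heq' : P r ≠ q := by
        intro h
        exact hrp (P.injective (h.trans hq))
      have heq'' : P r ≠ r := by
        intro h
        exact hrq (P.injective (h.trans hr))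
      by_cases hep : P r = p
      · -- g is a 3-cycle (p q r); all other points fixed
        have hfix : ∀ t, t ≠ p → t ≠ q → t ≠ r → P t = t := by
          intro t h1 h2 h3'
          by_contra hmv
          rcases hout t hmv h1 h2 h3' with h | h | h
          · exact h3' (P.injective (h.trans hep.symm))
          · exact h1 (P.injective (h.trans hq))
          · exact h2 (P.injective (h.trans hr))
        obtain ⟨z, z', hzz, hz, hz'⟩ :=
          exists_two_outside ({p, q, r} : Finset (Fin n)) (by
            have h1 := Finset.card_insert_le p ({q, r} : Finset (Fin n))
            have h2 := Finset.card_insert_le q ({r} : Finset (Fin n))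
            simp at h1 h2 ⊢
            omega)
        simp only [Finset.mem_insert, Finset.mem_singleton, not_or] at hz hz'
        exact caseB g p q r z z'
          hqp.symm hrp.symm (fun h => hz.1 h.symm) (fun h => hz'.1 h.symm)
          hrq.symm (fun h => hz.2.1 h.symm) (fun h => hz'.2.1 h.symm)
          (fun h => hz.2.2 h.symm) (fun h => hz'.2.2 h.symm) hzz
          hq.symm hr.symm hep (hfix z hz.1 hz.2.1 hz.2.2) (hfix z' hz'.1 hz'.2.1 hz'.2.2)
      · -- P r =: e is a 4th point; derive P = 4-cycle, contradiction with parity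
        exfalso
        set e := P r with he
        have hep' : e ≠ p := hep
        have hPee : P e ≠ e := fun h => heq'' (P.injective (h.trans he))
        have hPe : P e = p := by
          rcases hout e hPee hep' heq' heq'' with h | h | h
          · exact h
          · exact absurd (P.injective (h.trans hq)) hep'
          · exact absurd (P.injective (h.trans hr)) heq'
        have hfix : ∀ t, t ≠ p → t ≠ q → t ≠ r → t ≠ e → P t = t := by
          intro t h1 h2 h3' h4
          by_contra hmv
          rcases hout t hmv h1 h2 h3' with h | h | h
          · exact h4 (P.injective (h.trans hPe.symm))
          · exact h1 (P.injective (h.trans hq))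
          · exact h2 (P.injective (h.trans hr))
        have heqq : e ≠ q := heq'
        have heqr : e ≠ r := heq''
        have hPeq : P = Equiv.swap p e * Equiv.swap p r * Equiv.swap p q := by
          apply Equiv.ext
          intro t
          simp only [Perm.mul_apply]
          by_cases h1 : t = p
          · subst h1
            rw [Equiv.swap_apply_left,
              Equiv.swap_apply_of_ne_of_ne hqp (Ne.symm hrq),
              Equiv.swap_apply_of_ne_of_ne hqp (Ne.symm heqq)]
          · by_cases h2 : t = q
            · subst h2
              rw [Equiv.swap_apply_right, Equiv.swap_apply_left,
                Equiv.swap_apply_of_ne_of_ne hrp (Ne.symm heqr)]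
            · by_cases h3' : t = r
              · subst h3'
                rw [Equiv.swap_apply_of_ne_of_ne h1 hrq, Equiv.swap_apply_right,
                  Equiv.swap_apply_left]
              · by_cases h4 : t = e
                · subst h4
                  rw [Equiv.swap_apply_of_ne_of_ne h1 heqq,
                    Equiv.swap_apply_of_ne_of_ne h1 heqr,
                    Equiv.swap_apply_right]
                  exact hPe
                · rw [Equiv.swap_apply_of_ne_of_ne h1 h2,
                    Equiv.swap_apply_of_ne_of_ne h1 h3',
                    Equiv.swap_apply_of_ne_of_ne h1 h4]
                  exact hfix t h1 h2 h3' h4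
        have : Perm.sign P = -1 := by
          rw [hPeq]
          rw [Perm.sign_mul, Perm.sign_mul, Perm.sign_swap (Ne.symm hep'),
            Perm.sign_swap (Ne.symm hrp), Perm.sign_swap (Ne.symm hqp)]
          norm_num
        rw [hsg] at this
        exact absurd this (by decide)
  · -- involution case
    push_neg at h3
    have hinv : ∀ t, P t ≠ t → P (P t) = t := h3
    set a := a₀ with ha
    set b := P a with hb
    have hba : b ≠ a := ha₀
    have hPb : P b = a := hinv a ha₀
    by_cases hc : ∃ c, P c ≠ c ∧ c ≠ a ∧ c ≠ b
    · obtain ⟨c, hc1, hc2, hc3⟩ := hc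
      set d := P c with hd
      have hdc : d ≠ c := hc1
      have hPd : P d = c := hinv c hc1
      have hda : d ≠ a := by
        intro h
        exact hc3 (P.injective ((hd.symm.trans h).trans hPb.symm))
      have hdb : d ≠ b := by
        intro h
        exact hc2 (P.injective ((hd.symm.trans h).trans hb.symm).symm).symm
      by_cases hz : ∃ z, P z = z ∧ z ≠ a ∧ z ≠ b ∧ z ≠ c ∧ z ≠ d
      · obtain ⟨z, hz1, hz2, hz3, hz4, hz5⟩ := hz
        exact caseC g a b c d z
          (Ne.symm hba) hc2.symm hda.symm hz2.symm
          hc3.symm hdb.symm hz3.symm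
          (Ne.symm hdc) hz4.symm hz5.symm
          rfl hPb rfl hPd hz1
      · -- no fixed point outside {a,b,c,d}
        push_neg at hz
        have hmv : ∀ t', t' ≠ a → t' ≠ b → t' ≠ c → t' ≠ d → P t' ≠ t' := by
          intro t' h1 h2 h3' h4 hfx
          exact h4 (hz t' hfx h1 h2 h3')
        obtain ⟨u, hu⟩ := exists_outside ({a, b, c, d} : Finset (Fin n)) (by
          have h1 := Finset.card_insert_le a ({b, c, d} : Finset (Fin n))
          have h2 := Finset.card_insert_le b ({c, d} : Finset (Fin n))
          have h3' := Finset.card_insert_le c ({d} : Finset (Fin n))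
          simp at h1 h2 h3' ⊢
          omega)
        simp only [Finset.mem_insert, Finset.mem_singleton, not_or] at hu
        obtain ⟨hu1, hu2, hu3, hu4⟩ := hu
        have hu5 : P u ≠ u := hmv u hu1 hu2 hu3 hu4
        set v := P u with hv
        have hPv : P v = u := hinv u hu5
        have hvu : v ≠ u := hu5
        have hva : v ≠ a := by
          intro h
          exact hu2 (P.injective ((hv.symm.trans h).trans hPb.symm))
        have hvb : v ≠ b := by
          intro h
          exact hu1 (P.injective ((hv.symm.trans h).trans hb.symm).symm).symm
        have hvc : v ≠ c := by
          intro h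
          exact hu4 (P.injective ((hv.symm.trans h).trans hPd.symm))
        have hvd : v ≠ d := by
          intro h
          exact hu3 (P.injective ((hv.symm.trans h).trans hd.symm).symm).symm
        by_cases hw : ∃ w, w ≠ a ∧ w ≠ b ∧ w ≠ c ∧ w ≠ d ∧ w ≠ u ∧ w ≠ v
        · obtain ⟨w, hw1, hw2, hw3, hw4, hw5, hw6⟩ := hw
          have hw7 : P w ≠ w := hmv w hw1 hw2 hw3 hw4
          set z := P w with hzw
          have hPz : P z = w := hinv w hw7
          have hzww : z ≠ w := hw7
          have hza : z ≠ a := by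
            intro h
            exact hw2 (P.injective ((hzw.symm.trans h).trans hPb.symm))
          have hzb : z ≠ b := by
            intro h
            exact hw1 (P.injective ((hzw.symm.trans h).trans hb.symm).symm).symm
          have hzc : z ≠ c := by
            intro h
            exact hw4 (P.injective ((hzw.symm.trans h).trans hPd.symm))
          have hzd : z ≠ d := by
            intro h
            exact hw3 (P.injective ((hzw.symm.trans h).trans hd.symm).symm).symm
          have hzu : z ≠ u := by
            intro h
            exact hw6 (P.injective ((hzw.symm.trans h).trans hPv.symm))
          have hzv : z ≠ v := by
            intro h
            exact hw5 (P.injective ((hzw.symm.trans h).trans hv.symm).symm).symm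
          exact caseD g a b c d u v w z
            (Ne.symm hba) hc2.symm hda.symm (fun h => hu1 h.symm) hva.symm hw1.symm hza.symm
            hc3.symm hdb.symm (fun h => hu2 h.symm) hvb.symm hw2.symm hzb.symm
            (Ne.symm hdc) (fun h => hu3 h.symm) hvc.symm hw3.symm hzc.symm
            (fun h => hu4 h.symm) hvd.symm hw4.symm hzd.symm
            (Ne.symm hvu) hw5.symm hzu.symm
            hw6.symm hzv.symm
            (Ne.symm hzww)
            rfl hPb rfl hPd rfl hPv rfl hPz
        · -- universe is exactly {a,b,c,d,u,v}: P = (ab)(cd)(uv) odd, contradiction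
          exfalso
          push_neg at hw
          have hall : ∀ t : Fin n, t = a ∨ t = b ∨ t = c ∨ t = d ∨ t = u ∨ t = v := by
            intro t
            by_cases t1 : t = a
            · exact Or.inl t1
            by_cases t2 : t = b
            · exact Or.inr (Or.inl t2)
            by_cases t3 : t = c
            · exact Or.inr (Or.inr (Or.inl t3))
            by_cases t4 : t = d
            · exact Or.inr (Or.inr (Or.inr (Or.inl t4)))
            by_cases t5 : t = u
            · exact Or.inr (Or.inr (Or.inr (Or.inr (Or.inl t5))))
            exact Or.inr (Or.inr (Or.inr (Or.inr (Or.inr (hw t t1 t2 t3 t4 t5)))))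
          have hPeq : P = Equiv.swap a b * Equiv.swap c d * Equiv.swap u v := by
            apply Equiv.ext
            intro t
            simp only [Perm.mul_apply]
            rcases hall t with h | h | h | h | h | h <;> subst h
            · rw [Equiv.swap_apply_of_ne_of_ne (fun h => hu1 h.symm) (Ne.symm hva),
                Equiv.swap_apply_of_ne_of_ne hc2.symm (Ne.symm hda),
                Equiv.swap_apply_left]
            · rw [Equiv.swap_apply_of_ne_of_ne (fun h => hu2 h.symm) (Ne.symm hvb),
                Equiv.swap_apply_of_ne_of_ne hc3.symm (Ne.symm hdb),
                Equiv.swap_apply_right]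
              exact hPb
            · rw [Equiv.swap_apply_of_ne_of_ne (fun h => hu3 h.symm) (Ne.symm hvc),
                Equiv.swap_apply_left,
                Equiv.swap_apply_of_ne_of_ne hda hdb]
            · rw [Equiv.swap_apply_of_ne_of_ne (fun h => hu4 h.symm) (Ne.symm hvd),
                Equiv.swap_apply_right,
                Equiv.swap_apply_of_ne_of_ne hc2 hc3]
              exact hPd
            · rw [Equiv.swap_apply_left,
                Equiv.swap_apply_of_ne_of_ne hvc hvd,
                Equiv.swap_apply_of_ne_of_ne hva hvb]
            · rw [Equiv.swap_apply_right,
                Equiv.swap_apply_of_ne_of_ne (fun h => hu3 h) (fun h => hu4 h),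
                Equiv.swap_apply_of_ne_of_ne (fun h => hu1 h) (fun h => hu2 h)]
              exact hPv
          have : Perm.sign P = -1 := by
            rw [hPeq, Perm.sign_mul, Perm.sign_mul,
              Perm.sign_swap hba.symm, Perm.sign_swap hdc.symm, Perm.sign_swap hvu.symm]
            norm_num
          rw [hsg] at this
          exact absurd this (by decide)
    · -- P is a transposition: contradiction with parity
      exfalso
      push_neg at hc
      have hPeq : P = Equiv.swap a b := by
        apply Equiv.ext
        intro t
        by_cases h1 : t = a
        · subst h1; rw [Equiv.swap_apply_left]
        · by_cases h2 : t = b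
          · subst h2; rw [Equiv.swap_apply_right]; exact hPb
          · rw [Equiv.swap_apply_of_ne_of_ne h1 h2]
            by_contra hmv
            exact h2 (hc t hmv h1)
      have : Perm.sign P = -1 := by
        rw [hPeq, Perm.sign_swap hba.symm]
      rw [hsg] at this
      exact absurd this (by decide)
end

section
/- Let G be a finite group generated by a conjugacy class D of involutions such that for any two elements d, e ∈ D the order of the product d·e is 1, 2 or 3 (i.e., D is a class of 3-transpositions). Then every element d ∈ D is a 2-radical element of G: for all x, y ∈ G, the subgroup generated by the commutators ⁅d,x⁆ and ⁅d,y⁆ is solvable. -/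
/-!
Write `e = x d x⁻¹` and `f = y d y⁻¹`, so that `⁅d, x⁆ = d e` and `⁅d, y⁆ = d f` with `d, e, f ∈ D`
involutions, any two of which commute or satisfy the braid relation. Then `⟨d e, d f⟩` is the even
part of a quotient of a Coxeter group of type `A₁ × A₁ × A₁`, `A₁ × A₂`, `A₃` or `Ã₂`, and it is
metabelian: there is a solvable subgroup `N` normalised by `d`, `e`, `f` and containing
`⁅d e, d f⁆`, so `⟨d e, d f⟩` modulo its intersection with `N` is abelian. If one of `d, e, f`
commutes with the other two, `⟨d e, d f⟩` is generated by two involutions, hence dihedral; in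
type `A₃` the subgroup `N` is a Klein four-group, and in type `Ã₂` it is the abelian group of
translations.
-/

open scoped commutatorElement IsMulCommutative
open Subgroup

section

variable {G : Type*} [Group G]

theorem isSolvable_closure_of_commutator_mem {s : Set G} {N : Subgroup G} [Group.IsSolvable N]
    (hs : s ⊆ normalizer (N : Set G)) (hcomm : ∀ x ∈ s, ∀ y ∈ s, ⁅x, y⁆ ∈ N) :
    Group.IsSolvable (closure s) := by
  have := normal_subgroupOf_of_le_normalizer ((closure_le _).2 hs)
  rw [Group.isSolvable_iff_subgroup_quotient (N.subgroupOf (closure s))]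
  refine ⟨Group.isSolvable_of_isSolvable_injective (f := ((closure s).subtype.comp
    (N.subgroupOf _).subtype).codRestrict N fun x => x.2) fun x y h => ?_, ?_⟩
  · exact Subtype.ext (Subtype.ext congr(($h : G)))
  · set π := QuotientGroup.mk' (N.subgroupOf (closure s))
    have hcomm' := isMulCommutative_closure (k := π '' ((↑) ⁻¹' s)) <| by
      rintro _ ⟨x, hx, rfl⟩ _ ⟨y, hy, rfl⟩
      rw [← commutatorElement_eq_one_iff_mul_comm, ← map_commutatorElement,
        QuotientGroup.mk'_apply, QuotientGroup.eq_one_iff]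
      exact hcomm x hx y hy
    have htop : closure (π '' ((↑) ⁻¹' s)) = ⊤ := by
      rw [← MonoidHom.map_closure, closure_closure_coe_preimage, ← MonoidHom.range_eq_map,
        MonoidHom.range_eq_top]
      exact QuotientGroup.mk'_surjective _
    exact Group.isSolvable_of_comm fun a b =>
      congr(($((isMulCommutative_iff.1 hcomm') ⟨a, htop ▸ mem_top a⟩ ⟨b, htop ▸ mem_top b⟩) : _))

theorem isSolvable_closure_pair_of_commutator_mem {u v : G} {N : Subgroup G}
    [Group.IsSolvable N] (hu : u ∈ normalizer (N : Set G)) (hv : v ∈ normalizer (N : Set G))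
    (huv : ⁅u, v⁆ ∈ N) : Group.IsSolvable (closure {u, v}) := by
  refine isSolvable_closure_of_commutator_mem (by rintro _ (rfl | rfl) <;> assumption) ?_
  rintro x (rfl | rfl) y (rfl | rfl)
  · simp
  · exact huv
  · simpa [commutatorElement_inv] using inv_mem huv
  · simp

theorem mem_normalizer_closure_of_mul_self_eq_one {g : G} {S : Set G} (hg : g * g = 1)
    (h : ∀ t ∈ S, g * t * g ∈ closure S) : g ∈ normalizer (closure S : Set G) := by
  have hg' : g⁻¹ = g := inv_eq_of_mul_eq_one_right hg
  have hconj : ∀ t ∈ closure S, g * t * g ∈ closure S := by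
    have : (closure S).map (MulAut.conj g).toMonoidHom ≤ closure S := by
      rw [MonoidHom.map_closure, closure_le]
      rintro _ ⟨t, ht, rfl⟩
      simpa [hg'] using h t ht
    exact fun t ht => this ⟨t, ht, by simp [hg']⟩
  refine mem_normalizer_iff.2 fun t => ⟨fun ht => hg'.symm ▸ hconj t ht, fun ht => ?_⟩
  rw [hg'] at ht
  simpa [← mul_assoc, hg, mul_assoc _ g g] using hconj _ ht

theorem isSolvable_closure_pair_of_mul_self_eq_one {a b : G} (ha : a * a = 1) (hb : b * b = 1) :
    Group.IsSolvable (closure {a, b}) := by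
  have hinv : (a * b)⁻¹ = b * a := by
    rw [mul_inv_rev, inv_eq_of_mul_eq_one_right ha, inv_eq_of_mul_eq_one_right hb]
  have hmem : ∀ g, g * g = 1 → g * (a * b) * g = b * a →
      g ∈ normalizer (zpowers (a * b) : Set G) := by
    intro g hg h
    rw [zpowers_eq_closure]
    refine mem_normalizer_closure_of_mul_self_eq_one hg ?_
    rintro _ rfl
    rw [h, ← hinv]
    exact inv_mem (subset_closure rfl)
  refine isSolvable_closure_pair_of_commutator_mem (N := zpowers (a * b))
    (hmem a ha ?_) (hmem b hb ?_) ?_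
  · simp [← mul_assoc, ha]
  · simp [mul_assoc, hb]
  · rw [commutatorElement_def, inv_eq_of_mul_eq_one_right ha, inv_eq_of_mul_eq_one_right hb,
      mul_assoc (a * b)]
    exact mul_mem (mem_zpowers _) (mem_zpowers _)

theorem closure_inv_inv_mul_le (a b : G) : closure {a⁻¹, a⁻¹ * b} ≤ closure {a, b} := by
  rw [closure_le]
  rintro _ (rfl | rfl)
  · exact inv_mem (subset_closure (by simp))
  · exact mul_mem (inv_mem (subset_closure (by simp))) (subset_closure (by simp))

theorem closure_inv_inv_mul (a b : G) : closure {a⁻¹, a⁻¹ * b} = closure {a, b} :=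
  (closure_inv_inv_mul_le a b).antisymm (by simpa using closure_inv_inv_mul_le a⁻¹ (a⁻¹ * b))

theorem mul_mul_cancel_of_mul_self_eq_one {x : G} (hx : x * x = 1) (w : G) : w * x * x = w := by
  rw [mul_assoc, hx, mul_one]

theorem mul_braid_of_braid {x y : G} (h : x * y * x = y * x * y) (w : G) :
    w * x * y * x = w * y * x * y := by
  simp only [mul_assoc] at h ⊢
  rw [h]

section BraidTriple

/- Pairwise braiding involutions `x, y, z` generate a quotient of the affine Weyl group of type
`Ã₂`, in which `x * y * z * y = x * (y z y)` is a product of reflections in parallel mirrors,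
that is, a translation. -/

variable {x y z : G}

theorem commute_of_braid_triple (hx : x * x = 1) (hy : y * y = 1) (hz : z * z = 1)
    (hxy : x * y * x = y * x * y) (hyz : y * z * y = z * y * z) (hzx : z * x * z = x * z * x) :
    Commute (x * y * z * y) (y * z * x * z) := by
  have hx' := mul_mul_cancel_of_mul_self_eq_one hx
  have hy' := mul_mul_cancel_of_mul_self_eq_one hy
  have hz' := mul_mul_cancel_of_mul_self_eq_one hz
  calc x * y * z * y * (y * z * x * z) = x * y * z * y * y * z * x * z := by simp only [mul_assoc]
    _ = x * y * x * z := by rw [hy', hz']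
    _ = y * x * y * z * y * y := by rw [hxy, hy']
    _ = y * x * z * y * z * y := by rw [mul_braid_of_braid hyz]
    _ = y * x * z * x * x * y * z * y := by rw [hx']
    _ = y * z * x * z * x * y * z * y := by rw [mul_braid_of_braid hzx]
    _ = y * z * x * z * (x * y * z * y) := by simp only [mul_assoc]

theorem mem_normalizer_of_braid_triple (hx : x * x = 1) (hy : y * y = 1) (hz : z * z = 1)
    (hzx : z * x * z = x * z * x) :
    x ∈ normalizer (closure {x * y * z * y, y * z * x * z, z * x * y * x} : Set G) := by
  have hx' := mul_mul_cancel_of_mul_self_eq_one hx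
  have hxi := inv_eq_of_mul_eq_one_right hx
  have hyi := inv_eq_of_mul_eq_one_right hy
  have hzi := inv_eq_of_mul_eq_one_right hz
  set N := closure {x * y * z * y, y * z * x * z, z * x * y * x}
  refine mem_normalizer_closure_of_mul_self_eq_one hx ?_
  rintro _ (rfl | rfl | rfl)
  · convert inv_mem (subset_closure (by simp) : x * y * z * y ∈ N) using 1
    simp only [mul_inv_rev, hxi, hyi, hzi, ← mul_assoc, hx, one_mul]
  · convert inv_mem (subset_closure (by simp) : z * x * y * x ∈ N) using 1
    calc x * (y * z * x * z) * x = x * y * z * x * z * x := by simp only [mul_assoc]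
      _ = x * y * x * z := by rw [mul_braid_of_braid hzx, hx']
      _ = (z * x * y * x)⁻¹ := by simp only [mul_inv_rev, hxi, hyi, hzi, mul_assoc]
  · convert inv_mem (subset_closure (by simp) : y * z * x * z ∈ N) using 1
    calc x * (z * x * y * x) * x = x * z * x * y := by simp only [← mul_assoc, hx']
      _ = z * x * z * y := by rw [hzx]
      _ = (y * z * x * z)⁻¹ := by simp only [mul_inv_rev, hxi, hyi, hzi, mul_assoc]

end BraidTriple

section Involutions

variable {d e f : G}

theorem closure_mul_mul_swap (hd : d * d = 1) (he : e * e = 1) :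
    closure {e * d, e * f} = closure {d * e, d * f} := by
  rw [← closure_inv_inv_mul (d * e), mul_inv_rev, inv_eq_of_mul_eq_one_right hd,
    inv_eq_of_mul_eq_one_right he, mul_assoc, ← mul_assoc d, hd, one_mul]

theorem commutatorElement_mul_mul (hd : d * d = 1) (he : e * e = 1) (hf : f * f = 1) :
    ⁅d * e, d * f⁆ = d * e * d * f * e * d * f * d := by
  simp only [commutatorElement_def, mul_inv_rev, inv_eq_of_mul_eq_one_right hd,
    inv_eq_of_mul_eq_one_right he, inv_eq_of_mul_eq_one_right hf, mul_assoc]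

theorem isSolvable_closure_mul_mul_of_commute (hd : d * d = 1) (he : e * e = 1) (hf : f * f = 1)
    (hde : Commute d e) (hef : Commute e f) : Group.IsSolvable (closure {d * e, d * f}) := by
  rw [← closure_mul_mul_swap hd he]
  exact isSolvable_closure_pair_of_mul_self_eq_one
    (by rw [hde.mul_mul_mul_comm, he, hd, one_mul])
    (by rw [hef.symm.mul_mul_mul_comm, he, hf, one_mul])

theorem mem_normalizer_of_commute_of_braid (hd : d * d = 1) (hde : Commute d e)
    (hef : e * f * e = f * e * f) (hdf : d * f * d = f * d * f) :
    d ∈ normalizer (closure {d * e, f * d * e * f} : Set G) := by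
  set N := closure {d * e, f * d * e * f}
  have ha : d * e ∈ N := subset_closure (by simp)
  refine mem_normalizer_closure_of_mul_self_eq_one hd ?_
  rintro _ (rfl | rfl)
  · convert ha using 1
    rw [← mul_assoc, hd, one_mul, hde.eq]
  · convert mul_mem ha (subset_closure (by simp) : f * d * e * f ∈ N) using 1
    calc d * (f * d * e * f) * d = d * f * d * e * f * d := by simp only [mul_assoc]
      _ = d * f * e * d * f * d := by rw [hde.right_comm]
      _ = d * f * e * f * d * f := by rw [mul_braid_of_braid hdf]
      _ = d * e * f * e * d * f := by rw [mul_braid_of_braid hef.symm]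
      _ = d * e * f * d * e * f := by rw [hde.symm.right_comm]
      _ = d * e * (f * d * e * f) := by simp only [mul_assoc]

theorem isSolvable_closure_mul_mul_of_commute_of_braid (hd : d * d = 1) (he : e * e = 1)
    (hf : f * f = 1) (hde : Commute d e) (hef : e * f * e = f * e * f)
    (hdf : d * f * d = f * d * f) : Group.IsSolvable (closure {d * e, d * f}) := by
  have hf' := mul_mul_cancel_of_mul_self_eq_one hf
  have hdede : d * e * (d * e) = 1 := by rw [hde.symm.mul_mul_mul_comm, hd, he, one_mul]
  -- For `d = (1 2)`, `e = (3 4)`, `f = (2 3)` in `S₄`, `N` is the Klein four-group.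
  set N := closure {d * e, f * d * e * f}
  have ha : d * e ∈ N := subset_closure (by simp)
  have hb : f * d * e * f ∈ N := subset_closure (by simp)
  have : Group.IsSolvable N := by
    refine isSolvable_closure_pair_of_mul_self_eq_one hdede ?_
    calc f * d * e * f * (f * d * e * f) = f * d * e * f * f * d * e * f := by
          simp only [mul_assoc]
      _ = f * (d * e * (d * e)) * f := by rw [hf']; simp only [mul_assoc]
      _ = 1 := by rw [hdede, mul_one, hf]
  have hdN : d ∈ normalizer (N : Set G) := mem_normalizer_of_commute_of_braid hd hde hef hdf
  have heN : e ∈ normalizer (N : Set G) := by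
    convert mem_normalizer_of_commute_of_braid he hde.symm hdf hef using 4
    rw [hde.eq, hde.right_comm]
  have hfN : f ∈ normalizer (N : Set G) := by
    refine mem_normalizer_closure_of_mul_self_eq_one hf ?_
    rintro _ (rfl | rfl)
    · convert hb using 1
      simp only [mul_assoc]
    · convert ha using 1
      rw [← mul_assoc, ← mul_assoc, ← mul_assoc, hf, one_mul, hf']
  refine isSolvable_closure_pair_of_commutator_mem (mul_mem hdN heN) (mul_mem hdN hfN) ?_
  have hd' := mul_mul_cancel_of_mul_self_eq_one hd
  convert hb using 1
  calc ⁅d * e, d * f⁆ = d * e * d * f * e * d * f * d := commutatorElement_mul_mul hd he hf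
    _ = e * d * d * f * e * d * f * d := by rw [hde.eq]
    _ = e * f * e * d * f * d := by rw [hd']
    _ = f * e * f * d * f * d := by rw [hef]
    _ = f * e * f * f * d * f := by rw [mul_braid_of_braid hdf]
    _ = f * e * d * f := by rw [hf']
    _ = f * d * e * f := by rw [hde.symm.right_comm]

theorem isSolvable_closure_mul_mul_of_braid (hd : d * d = 1) (he : e * e = 1)
    (hf : f * f = 1) (hde : d * e * d = e * d * e) (hef : e * f * e = f * e * f)
    (hfd : f * d * f = d * f * d) : Group.IsSolvable (closure {d * e, d * f}) := by
  set N := closure {d * e * f * e, e * f * d * f, f * d * e * d}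
  have : IsMulCommutative N := by
    have h₁ := commute_of_braid_triple hd he hf hde hef hfd
    have h₂ := commute_of_braid_triple he hf hd hef hfd hde
    have h₃ := commute_of_braid_triple hf hd he hfd hde hef
    refine isMulCommutative_closure ?_
    rintro _ (rfl | rfl | rfl) _ (rfl | rfl | rfl) <;> simp only [h₁.eq, h₂.eq, h₃.eq]
  have hdN : d ∈ normalizer (N : Set G) := mem_normalizer_of_braid_triple hd he hf hfd
  have heN : e ∈ normalizer (N : Set G) := by
    convert mem_normalizer_of_braid_triple he hf hd hde using 4
    ext; simp only [Set.mem_insert_iff, Set.mem_singleton_iff]; tauto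
  have hfN : f ∈ normalizer (N : Set G) := by
    convert mem_normalizer_of_braid_triple hf hd he hef using 4
    ext; simp only [Set.mem_insert_iff, Set.mem_singleton_iff]; tauto
  refine isSolvable_closure_pair_of_commutator_mem (mul_mem hdN heN) (mul_mem hdN hfN) ?_
  have hd' := mul_mul_cancel_of_mul_self_eq_one hd
  convert mul_mem (subset_closure (by simp) : e * f * d * f ∈ N)
    (inv_mem (subset_closure (by simp) : f * d * e * d ∈ N)) using 1
  calc ⁅d * e, d * f⁆ = d * e * d * f * e * d * f * d := commutatorElement_mul_mul hd he hf
    _ = e * d * e * f * e * d * f * d := by rw [hde]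
    _ = e * d * f * e * f * d * f * d := by rw [mul_braid_of_braid hef]
    _ = e * d * f * e * d * f * d * d := by rw [mul_braid_of_braid hfd]
    _ = e * d * f * d * d * e * d * f := by rw [hd', hd']
    _ = e * f * d * f * d * e * d * f := by rw [mul_braid_of_braid hfd]
    _ = e * f * d * f * (f * d * e * d)⁻¹ := by
      simp only [mul_inv_rev, inv_eq_of_mul_eq_one_right hd, inv_eq_of_mul_eq_one_right he,
        inv_eq_of_mul_eq_one_right hf, mul_assoc]

theorem isSolvable_closure_mul_mul (hd : d * d = 1) (he : e * e = 1) (hf : f * f = 1)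
    (hde : Commute d e ∨ d * e * d = e * d * e) (hdf : Commute d f ∨ d * f * d = f * d * f)
    (hef : Commute e f ∨ e * f * e = f * e * f) : Group.IsSolvable (closure {d * e, d * f}) := by
  -- `⟨d e, d f⟩` does not change under permutations of `d, e, f`, which bring every pattern of
  -- relations into one of the three cases.
  rcases hde with hde | hde <;> rcases hdf with hdf | hdf <;> rcases hef with hef | hef
  · exact isSolvable_closure_mul_mul_of_commute hd he hf hde hef
  · rw [← closure_mul_mul_swap hd he]
    exact isSolvable_closure_mul_mul_of_commute he hd hf hde.symm hdf
  · exact isSolvable_closure_mul_mul_of_commute hd he hf hde hef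
  · exact isSolvable_closure_mul_mul_of_commute_of_braid hd he hf hde hef hdf
  · rw [Set.pair_comm]
    exact isSolvable_closure_mul_mul_of_commute hd hf he hdf hef.symm
  · rw [Set.pair_comm]
    exact isSolvable_closure_mul_mul_of_commute_of_braid hd hf he hdf hef.symm hde
  · rw [← closure_mul_mul_swap hd he, Set.pair_comm]
    exact isSolvable_closure_mul_mul_of_commute_of_braid he hf hd hef hdf.symm hde.symm
  · exact isSolvable_closure_mul_mul_of_braid hd he hf hde hef hdf.symm

end Involutions

theorem commute_or_braid_of_orderOf_mul {x y : G} (hx : x * x = 1) (hy : y * y = 1)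
    (h : orderOf (x * y) = 1 ∨ orderOf (x * y) = 2 ∨ orderOf (x * y) = 3) :
    Commute x y ∨ x * y * x = y * x * y := by
  have hxi := inv_eq_of_mul_eq_one_right hx
  have hyi := inv_eq_of_mul_eq_one_right hy
  obtain h2 | h3 : orderOf (x * y) ∣ 2 ∨ orderOf (x * y) ∣ 3 := by
    rcases h with h | h | h <;> rw [h] <;> decide
  · rw [orderOf_dvd_iff_pow_eq_one, pow_two] at h2
    refine .inl (?_ : x * y = y * x)
    simpa only [mul_inv_rev, hxi, hyi] using eq_inv_of_mul_eq_one_left h2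
  · rw [orderOf_dvd_iff_pow_eq_one, pow_succ, pow_two] at h3
    right
    have : x * y * x * (y * x * y) = 1 := by simpa only [mul_assoc] using h3
    simpa only [mul_inv_rev, hxi, hyi, mul_assoc] using eq_inv_of_mul_eq_one_left this

end

theorem three_transpositions_two_radical_general {G : Type*} [Group G]
    (D : Set G) (d₀ : G) (hclass : D = {x : G | IsConj d₀ x})
    (hinv : ∀ d ∈ D, orderOf d = 2)
    (hord : ∀ d ∈ D, ∀ e ∈ D, orderOf (d * e) = 1 ∨ orderOf (d * e) = 2 ∨
      orderOf (d * e) = 3) :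
    ∀ d ∈ D, ∀ x y : G,
      IsSolvable (Subgroup.closure ({⁅d, x⁆, ⁅d, y⁆} : Set G)) := by
  intro d hd x y
  have hD : ∀ g : G, g * d * g⁻¹ ∈ D := fun g => by
    rw [hclass] at hd ⊢
    exact hd.trans (isConj_iff.2 ⟨g, rfl⟩)
  have hsq : ∀ a ∈ D, a * a = 1 := fun a ha => by
    rw [← pow_two, ← hinv a ha, pow_orderOf_eq_one]
  have hcomm : ∀ g : G, ⁅d, g⁆ = d * (g * d * g⁻¹) := fun g => by
    rw [commutatorElement_def, inv_eq_of_mul_eq_one_right (hsq d hd), mul_assoc, mul_assoc,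
      mul_assoc]
  have hrel : ∀ a ∈ D, ∀ b ∈ D, Commute a b ∨ a * b * a = b * a * b := fun a ha b hb =>
    commute_or_braid_of_orderOf_mul (hsq a ha) (hsq b hb) (hord a ha b hb)
  rw [hcomm, hcomm]
  exact isSolvable_closure_mul_mul (hsq d hd) (hsq _ (hD x)) (hsq _ (hD y))
    (hrel _ hd _ (hD x)) (hrel _ hd _ (hD y)) (hrel _ (hD x) _ (hD y))

/-- Let `G` be a finite group generated by a conjugacy class `D` of involutions such
that the product of any two elements of `D` has order 1, 2 or 3 (a class of
3-transpositions). Then every `d ∈ D` is a 2-radical element: for all `x, y ∈ G`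
the subgroup generated by `⁅d,x⁆` and `⁅d,y⁆` is solvable. -/
theorem three_transpositions_two_radical {G : Type*} [Group G] [Finite G]
    (D : Set G) (d₀ : G) (hclass : D = {x : G | IsConj d₀ x})
    (hinv : ∀ d ∈ D, orderOf d = 2)
    (hgen : Subgroup.closure D = ⊤)
    (hord : ∀ d ∈ D, ∀ e ∈ D, orderOf (d * e) = 1 ∨ orderOf (d * e) = 2 ∨
      orderOf (d * e) = 3) :
    ∀ d ∈ D, ∀ x y : G,
      IsSolvable (Subgroup.closure ({⁅d, x⁆, ⁅d, y⁆} : Set G)) :=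
  three_transpositions_two_radical_general D d₀ hclass hinv hord
end

section
/- Every transposition of a symmetric group is a nontrivial 2-radical element: if σ is a transposition in the symmetric group on a set, then σ ≠ 1 and for all permutations x, y the subgroup generated by the commutators ⁅σ,x⁆ and ⁅σ,y⁆ is solvable. In particular, the symmetric group S_n (n ≥ 2) contains a nontrivial 2-radical element. -/
open scoped commutatorElement

open Equiv Equiv.Perm

/-! If `σ = swap a b`, then `⁅σ, x⁆ = swap a b * swap (x a) (x b)`, so both commutators lie in
the group generated by three transpositions. The points moved by three transpositions split into
two disjoint blocks of at most four points, each transposition acting inside one block. Hence that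
group embeds in `S₄ × S₄`, which is solvable because `S₄ ⊳ A₄ ⊳ V₄ ⊳ 1` has abelian factors. -/

theorem Subgroup.isSolvable_sup_of_commute {G : Type*} [Group G] {H K : Subgroup G}
    [Group.IsSolvable H] [Group.IsSolvable K] (hHK : ∀ h ∈ H, ∀ k ∈ K, Commute h k) :
    Group.IsSolvable ↥(H ⊔ K) := by
  have hcomm : ∀ (h : H) (k : K), Commute (H.subtype h) (K.subtype k) := fun h k ↦ hHK h h.2 k k.2
  have hrange : (H.subtype.noncommCoprod K.subtype hcomm).range = H ⊔ K := by
    rw [MonoidHom.noncommCoprod_range, H.range_subtype, K.range_subtype]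
  have := Group.isSolvable_of_surjective
    (H.subtype.noncommCoprod K.subtype hcomm).rangeRestrict_surjective
  rwa [hrange] at this

instance Equiv.Perm.isSolvable_fin_four : Group.IsSolvable (Perm (Fin 4)) := by
  have hcard : Nat.card (Fin 4) = 4 := Nat.card_fin 4
  have : IsKleinFour (alternatingGroup.kleinFour (Fin 4)) :=
    alternatingGroup.kleinFour_isKleinFour hcard
  have : Group.IsSolvable (alternatingGroup.kleinFour (Fin 4)) :=
    Group.isSolvable_of_comm IsKleinFour.isMulCommutative.is_comm.comm
  have : Group.IsSolvable (alternatingGroup (Fin 4)) :=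
    Group.isSolvable_of_ker_le_range (alternatingGroup.kleinFour (Fin 4)).subtype Abelianization.of
      (by rw [Abelianization.ker_of, ← alternatingGroup.kleinFour_eq_commutator hcard,
        Subgroup.range_subtype])
  exact Group.isSolvable_of_ker_le_range (alternatingGroup (Fin 4)).subtype sign
    (Subgroup.range_subtype _).ge

theorem Equiv.Perm.isSolvable_of_card_le_four {α : Type*} [Fintype α]
    (h : Fintype.card α ≤ 4) : Group.IsSolvable (Perm α) := by
  obtain ⟨ι⟩ := Function.Embedding.nonempty_of_card_le (h.trans_eq (Fintype.card_fin 4).symm)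
  exact Group.isSolvable_of_isSolvable_injective (viaEmbeddingHom_injective ι)

theorem Equiv.Perm.isSolvable_range_ofSubtype {α : Type*} [DecidableEq α] {T : Finset α} (hT : T.card ≤ 4) :
    Group.IsSolvable (ofSubtype : Perm {x // x ∈ T} →* Perm α).range := by
  have := isSolvable_of_card_le_four (α := {x // x ∈ T}) (by simpa using hT)
  exact Group.isSolvable_of_surjective ofSubtype.rangeRestrict_surjective

theorem Equiv.Perm.mem_range_ofSubtype_of_forall {α : Type*} {p : α → Prop} [DecidablePred p]
    {g : Perm α} (hg : ∀ x, g x ≠ x → p x) : g ∈ (ofSubtype : Perm (Subtype p) →* Perm α).range := by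
  have hinv : ∀ x, p (g x) ↔ p x := fun x ↦ by
    by_cases hx : g x = x
    · rw [hx]
    · exact iff_of_true (hg _ fun h ↦ hx (g.injective h)) (hg x hx)
  exact ⟨g.subtypePerm hinv, ofSubtype_subtypePerm hinv hg⟩

theorem Equiv.Perm.commute_ofSubtype_of_disjoint {α : Type*} {p q : α → Prop}
    [DecidablePred p] [DecidablePred q] (hpq : ∀ x, p x → ¬q x)
    (g : Perm (Subtype p)) (h : Perm (Subtype q)) : Commute (ofSubtype g) (ofSubtype h) := by
  refine Disjoint.commute fun x ↦ ?_
  by_cases hx : p x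
  · exact .inr (ofSubtype_apply_of_not_mem h (hpq x hx))
  · exact .inl (ofSubtype_apply_of_not_mem g hx)

theorem Equiv.Perm.isSolvable_closure_of_forall_supported {α : Type*} [DecidableEq α]
    {T U : Finset α} (hTU : _root_.Disjoint T U) (hT : T.card ≤ 4) (hU : U.card ≤ 4)
    {S : Set (Perm α)} (hS : ∀ g ∈ S, (∀ x, g x ≠ x → x ∈ T) ∨ (∀ x, g x ≠ x → x ∈ U)) :
    Group.IsSolvable (Subgroup.closure S) := by
  let HT := (ofSubtype : Perm {x // x ∈ T} →* Perm α).range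
  let HU := (ofSubtype : Perm {x // x ∈ U} →* Perm α).range
  have : Group.IsSolvable HT := isSolvable_range_ofSubtype hT
  have : Group.IsSolvable HU := isSolvable_range_ofSubtype hU
  have hcomm : ∀ g ∈ HT, ∀ h ∈ HU, Commute g h := by
    rintro - ⟨g, rfl⟩ - ⟨h, rfl⟩
    exact commute_ofSubtype_of_disjoint (fun _ hx ↦ Finset.disjoint_left.mp hTU hx) g h
  have hle : Subgroup.closure S ≤ HT ⊔ HU := (Subgroup.closure_le _).mpr fun g hg ↦
    (hS g hg).elim (fun h ↦ Subgroup.mem_sup_left (mem_range_ofSubtype_of_forall h))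
      (fun h ↦ Subgroup.mem_sup_right (mem_range_ofSubtype_of_forall h))
  have := Subgroup.isSolvable_sup_of_commute hcomm
  exact Group.isSolvable_of_isSolvable_injective (Subgroup.inclusion_injective hle)

theorem Finset.card_union_add_one_le_of_not_disjoint {α : Type*} [DecidableEq α] {s t : Finset α}
    (h : ¬Disjoint s t) : (s ∪ t).card + 1 ≤ s.card + t.card := by
  have := card_union_add_card_inter s t
  have := card_pos.mpr (not_disjoint_iff_nonempty_inter.mp h)
  omega

theorem Finset.exists_disjoint_cover_of_card_le_two {α : Type*} [DecidableEq α] {s t u : Finset α}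
    (hs : s.card ≤ 2) (ht : t.card ≤ 2) (hu : u.card ≤ 2) :
    ∃ T U : Finset α, Disjoint T U ∧ T.card ≤ 4 ∧ U.card ≤ 4 ∧
      (s ⊆ T ∨ s ⊆ U) ∧ (t ⊆ T ∨ t ⊆ U) ∧ (u ⊆ T ∨ u ⊆ U) := by
  by_cases hst : Disjoint s t
  · by_cases hsu : Disjoint s u
    · refine ⟨s, t ∪ u, disjoint_union_right.mpr ⟨hst, hsu⟩, by omega, ?_, by grind⟩
      grw [card_union_le]; omega
    by_cases htu : Disjoint t u
    · refine ⟨s ∪ u, t, disjoint_union_left.mpr ⟨hst, htu.symm⟩, ?_, by omega, by grind⟩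
      grw [card_union_le]; omega
    have h₁ := card_union_add_one_le_of_not_disjoint hsu
    have h₂ := card_union_add_one_le_of_not_disjoint (s := s ∪ u) (t := t)
      (fun h ↦ htu (disjoint_union_left.mp h).2.symm)
    exact ⟨s ∪ u ∪ t, ∅, disjoint_empty_right _, by omega, by simp, by grind⟩
  by_cases hstu : Disjoint (s ∪ t) u
  · refine ⟨s ∪ t, u, hstu, ?_, by omega, by grind⟩
    have := card_union_add_one_le_of_not_disjoint hst
    omega
  have h₁ := card_union_add_one_le_of_not_disjoint hst
  have h₂ := card_union_add_one_le_of_not_disjoint hstu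
  exact ⟨s ∪ t ∪ u, ∅, disjoint_empty_right _, by omega, by simp, by grind⟩

theorem Equiv.Perm.isSolvable_closure_swap_three {α : Type*} [DecidableEq α] (a b c d e f : α) :
    Group.IsSolvable (Subgroup.closure ({swap a b, swap c d, swap e f} : Set (Perm α))) := by
  obtain ⟨T, U, hTU, hT, hU, hab, hcd, hef⟩ := Finset.exists_disjoint_cover_of_card_le_two
    (Finset.card_le_two (a := a) (b := b)) (Finset.card_le_two (a := c) (b := d))
    (Finset.card_le_two (a := e) (b := f))
  have hswap : ∀ {x y : α} {V : Finset α}, {x, y} ⊆ V → ∀ z, swap x y z ≠ z → z ∈ V := by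
    intro x y V hV z hz
    obtain ⟨-, rfl | rfl⟩ := swap_apply_ne_self_iff.mp hz <;> simp_all [Finset.insert_subset_iff]
  refine isSolvable_closure_of_forall_supported hTU hT hU ?_
  simp only [Set.mem_insert_iff, Set.mem_singleton_iff, forall_eq_or_imp, forall_eq]
  exact ⟨hab.imp hswap hswap, hcd.imp hswap hswap, hef.imp hswap hswap⟩

theorem Equiv.commutatorElement_swap {α : Type*} [DecidableEq α] (a b : α) (x : Perm α) :
    ⁅swap a b, x⁆ = swap a b * swap (x a) (x b) := by
  rw [commutatorElement_def, swap_apply_apply, swap_inv]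
  group

/-- Every transposition of a symmetric group is a nontrivial 2-radical element:
if `σ` is a swap then `σ ≠ 1` and for all permutations `x, y` the subgroup
generated by `⁅σ,x⁆` and `⁅σ,y⁆` is solvable. -/
theorem swap_is_nontrivial_two_radical {α : Type*} [DecidableEq α]
    (σ : Equiv.Perm α) (hσ : σ.IsSwap) :
    σ ≠ 1 ∧ ∀ x y : Equiv.Perm α,
      Group.IsSolvable (Subgroup.closure ({⁅σ, x⁆, ⁅σ, y⁆} : Set (Equiv.Perm α))) := by
  refine ⟨hσ.isCycle.ne_one, fun x y ↦ ?_⟩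
  obtain ⟨a, b, -, rfl⟩ := hσ
  have hle : Subgroup.closure ({⁅swap a b, x⁆, ⁅swap a b, y⁆} : Set (Perm α)) ≤
      Subgroup.closure {swap a b, swap (x a) (x b), swap (y a) (y b)} := by
    rw [Subgroup.closure_le, Set.insert_subset_iff, Set.singleton_subset_iff,
      commutatorElement_swap, commutatorElement_swap]
    exact ⟨mul_mem (Subgroup.subset_closure (by simp)) (Subgroup.subset_closure (by simp)),
      mul_mem (Subgroup.subset_closure (by simp)) (Subgroup.subset_closure (by simp))⟩
  have := isSolvable_closure_swap_three a b (x a) (x b) (y a) (y b)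
  exact Group.isSolvable_of_isSolvable_injective (Subgroup.inclusion_injective hle)
end

section
/- The symplectic group Sp(2n, 2) over the field with 2 elements, with n ≥ 2, contains a nontrivial 2-radical element: there exists g in the symplectic group of 2n×2n matrices over ZMod 2 with g ≠ 1 such that for all x, y in the symplectic group, the subgroup generated by the commutators ⁅g,x⁆ and ⁅g,y⁆ is solvable. -/
/-!
Take for `g` a symplectic transvection `t_e : w ↦ w + ω(e, w) e`. It is an involution, and
`x t_e x⁻¹ = t_{xe}`, so `⁅g, x⁆ = t_e t_{xe}`. Over `𝔽₂` a product `t_v t_w` has order dividing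
`2` or `3` (according as `ω(v, w)` is `0` or `1`), so the subgroup to be shown solvable is
generated by `g h` and `g k` for three involutions `g, h, k` whose pairwise products have order
at most `3`. It is a quotient of a von Dyck group `D(p, q, r)` with `p, q, r ∈ {2, 3}`, and each
of these is metabelian: the group is generated by two elements `u, y` such that the conjugates of
`u` by powers of `y` commute with each other.
-/

open scoped commutatorElement

section GroupTheory

variable {G : Type*} [Group G]

theorem inv_eq_self_of_sq_eq_one {a : G} (h : a ^ 2 = 1) : a⁻¹ = a :=
  inv_eq_of_mul_eq_one_right (by rwa [← sq])

namespace Subgroup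

theorem isSolvable_closure_pair_of_commutator_mem {a b : G} {N : Subgroup G}
    [IsMulCommutative N] (ha : a ∈ normalizer (N : Set G)) (hb : b ∈ normalizer (N : Set G))
    (hab : ⁅a, b⁆ ∈ N) : Group.IsSolvable (closure {a, b}) := by
  set H := closure ({a, b} : Set G)
  have := normal_subgroupOf_of_le_normalizer ((closure_le _).mpr (Set.pair_subset ha hb))
  set K := N.subgroupOf H
  have : Group.IsSolvable K := Group.isSolvable_of_comm fun p q =>
    Subtype.ext <| Subtype.ext <| setLike_mul_comm (s := N) p.2 q.2
  let a' : H := ⟨a, subset_closure (by simp)⟩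
  let b' : H := ⟨b, subset_closure (by simp)⟩
  have hgen : closure {(a' : H ⧸ K), (b' : H ⧸ K)} = ⊤ := by
    have : closure ({a', b'} : Set H) = ⊤ := by
      rw [← closure_closure_coe_preimage (k := {a, b})]
      congr 1
      ext p
      simp [a', b', Subtype.ext_iff]
    rw [← MonoidHom.range_eq_top.mpr (QuotientGroup.mk'_surjective K), MonoidHom.range_eq_map,
      ← this, MonoidHom.map_closure, Set.image_pair]
    rfl
  have hcomm : (a' : H ⧸ K) * b' = b' * a' := by
    rw [← commutatorElement_eq_one_iff_mul_comm, ← QuotientGroup.mk'_apply,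
      ← QuotientGroup.mk'_apply, ← map_commutatorElement, QuotientGroup.mk'_apply, QuotientGroup.eq_one_iff]
    exact mem_subgroupOf.mpr hab
  have := isMulCommutative_closure (k := {(a' : H ⧸ K), (b' : H ⧸ K)}) <| by
    rintro _ (rfl | rfl) _ (rfl | rfl) <;> simp [hcomm]
  rw [hgen] at this
  have : Group.IsSolvable (H ⧸ K) := Group.isSolvable_of_comm fun p q =>
    setLike_mul_comm (s := (⊤ : Subgroup (H ⧸ K))) (mem_top p) (mem_top q)
  exact Group.isSolvable_of_ker_le_range K.subtype (QuotientGroup.mk' K) (by simp)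

theorem isSolvable_closure_pair_of_forall_commute_conj {u y : G}
    (hu : ∀ c ∈ zpowers y, Commute u (c * u * c⁻¹)) : Group.IsSolvable (closure {u, y}) := by
  set T := (fun c => c * u * c⁻¹) '' (zpowers y : Set G)
  have hT {c : G} (hc : c ∈ zpowers y) : c * u * c⁻¹ ∈ closure T := subset_closure ⟨c, hc, rfl⟩
  have : IsMulCommutative (closure T) := isMulCommutative_closure <| by
    rintro _ ⟨c, hc, rfl⟩ _ ⟨d, hd, rfl⟩
    simpa [mul_assoc] using ((hu _ (mul_mem (inv_mem hc) hd)).map (MulAut.conj c)).eq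
  apply isSolvable_closure_pair_of_commutator_mem (N := closure T)
  · exact le_normalizer (by simpa using hT (one_mem _))
  · refine le_normalizer_closure_iff.mpr ?_ (mem_zpowers y)
    rintro c hc _ ⟨d, hd, rfl⟩
    simpa [mul_assoc] using hT (mul_mem hc hd)
  · have : ⁅u, y⁆ = u * (y * u * y⁻¹)⁻¹ := by group
    rw [this]
    exact mul_mem (by simpa using hT (one_mem _)) (inv_mem (hT (mem_zpowers y)))

theorem eq_one_or_eq_or_eq_inv_of_mem_zpowers {y c : G} (hy : y ^ 2 = 1 ∨ y ^ 3 = 1)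
    (hc : c ∈ zpowers y) : c = 1 ∨ c = y ∨ c = y⁻¹ := by
  obtain ⟨k, rfl⟩ := mem_zpowers_iff.mp hc
  rcases hy with hy | hy
  · rw [zpow_eq_zpow_emod k (n := 2) (mod_cast hy)]
    rcases (by omega : k % 2 = 0 ∨ k % 2 = 1) with h | h <;> simp [h]
  · rw [zpow_eq_zpow_emod k (n := 3) (mod_cast hy)]
    rcases (by omega : k % 3 = 0 ∨ k % 3 = 1 ∨ k % 3 = 2) with h | h | h
    · simp [h]
    · simp [h]
    · simp [h, eq_inv_iff_mul_eq_one, ← pow_succ, hy]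

theorem isSolvable_closure_pair_of_commute_conj {u y : G} (hy : y ^ 2 = 1 ∨ y ^ 3 = 1)
    (hu : Commute u (y * u * y⁻¹)) : Group.IsSolvable (closure {u, y}) := by
  refine isSolvable_closure_pair_of_forall_commute_conj fun c hc => ?_
  rcases eq_one_or_eq_or_eq_inv_of_mem_zpowers hy hc with rfl | rfl | rfl
  · simp
  · exact hu
  · simpa [mul_assoc] using (hu.map (MulAut.conj y⁻¹)).symm

theorem closure_pair_mul_zpow (a b : G) (k : ℤ) : closure {a * b ^ k, b} = closure {a, b} := by
  have hb {a' : G} : b ∈ closure {a', b} := subset_closure (by simp)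
  have ha {a' : G} : a' ∈ closure {a', b} := subset_closure (by simp)
  refine le_antisymm ((closure_le _).mpr (Set.pair_subset ?_ hb)) ((closure_le _).mpr
    (Set.pair_subset ?_ hb))
  · exact mul_mem ha (zpow_mem hb k)
  · simpa using mul_mem (ha (a' := a * b ^ k)) (zpow_mem hb (-k))

theorem closure_pair_inv_left (a b : G) : closure {a⁻¹, b} = closure {a, b} := by
  have hb {a' : G} : b ∈ closure {a', b} := subset_closure (by simp)
  have ha {a' : G} : a' ∈ closure {a', b} := subset_closure (by simp)
  refine le_antisymm ((closure_le _).mpr (Set.pair_subset ?_ hb)) ((closure_le _).mpr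
    (Set.pair_subset ?_ hb))
  · exact inv_mem ha
  · simpa using inv_mem (ha (a' := a⁻¹))

theorem closure_pair_rotate {x y z : G} (h : x * y * z = 1) :
    closure {y, z} = closure {x, y} := by
  have hx : x = (y * z)⁻¹ := eq_inv_of_mul_eq_one_left (by rw [← mul_assoc, h])
  have hz : z = (x * y)⁻¹ := eq_inv_of_mul_eq_one_right h
  have hl {a b : G} : a ∈ closure {a, b} := subset_closure (by simp)
  have hr {a b : G} : b ∈ closure {a, b} := subset_closure (by simp)
  refine le_antisymm ((closure_le _).mpr (Set.pair_subset hr ?_))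
    ((closure_le _).mpr (Set.pair_subset ?_ hl))
  · exact hz ▸ inv_mem (mul_mem hl hr)
  · exact hx ▸ inv_mem (mul_mem hl hr)

theorem isSolvable_closure_pair_of_sq_eq_one {a b : G} (ha : a ^ 2 = 1) (hb : b ^ 2 = 1) :
    Group.IsSolvable (closure {a, b}) := by
  rw [← closure_pair_mul_zpow a b 1, zpow_one]
  refine isSolvable_closure_pair_of_commute_conj (.inl hb) ?_
  have : b * (a * b) * b⁻¹ = (a * b)⁻¹ := calc
    _ = b * a := by group
    _ = (a * b)⁻¹ := by rw [mul_inv_rev, inv_eq_self_of_sq_eq_one ha, inv_eq_self_of_sq_eq_one hb]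
  rw [this]
  exact (Commute.refl _).inv_right

theorem isSolvable_closure_pair_of_sq_of_pow_three {a b : G} (ha : a ^ 2 = 1) (hb : b ^ 3 = 1)
    (hab : (a * b) ^ 3 = 1) : Group.IsSolvable (closure {a, b}) := by
  refine isSolvable_closure_pair_of_commute_conj (.inr hb) ?_
  have ha' := inv_eq_self_of_sq_eq_one ha
  have hb3 : b * b * b = 1 := by rw [← hb, pow_three']
  have hab3 : a * b * a * b * a * b = 1 := by rw [← hab, pow_three']; group
  have hap : a * (b * a * b⁻¹) = b⁻¹ * a * b := calc
    _ = a * b * a * b * a * b * (b⁻¹ * a⁻¹ * (b * b * b)⁻¹ * b) := by group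
    _ = b⁻¹ * a * b := by rw [hab3, hb3, ha']; group
  have hpa : b * a * b⁻¹ * a = (a * (b * a * b⁻¹))⁻¹ := by
    simp only [mul_inv_rev, inv_inv, ha', mul_assoc]
  rw [commute_iff_eq, hpa, hap]
  simp only [mul_inv_rev, inv_inv, ha', mul_assoc]

theorem isSolvable_closure_pair_of_pow_three {a b : G} (ha : a ^ 3 = 1) (hb : b ^ 3 = 1)
    (hab : (a * b) ^ 3 = 1) : Group.IsSolvable (closure {a, b}) := by
  -- `a * b⁻¹` and its conjugates under `b` are the translations of the (3,3,3) triangle group.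
  rw [← closure_pair_mul_zpow a b (-1), zpow_neg_one]
  refine isSolvable_closure_pair_of_commute_conj (.inr hb) ?_
  have ha3 : a * a * a = 1 := by rw [← ha, pow_three']
  have hb3 : b * b * b = 1 := by rw [← hb, pow_three']
  have hab3 : a * b * a * b * a * b = 1 := by rw [← hab, pow_three']; group
  rw [commute_iff_eq]
  calc a * b⁻¹ * (b * (a * b⁻¹) * b⁻¹)
      = a * a * a * (a⁻¹ * b⁻¹ * b⁻¹) := by group
    _ = a⁻¹ * (a * b * a * b * a * b) * b⁻¹ * b⁻¹ := by rw [ha3, hab3]; group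
    _ = b * a * b * a * b⁻¹ := by group
    _ = b * a * b * (b * b * b)⁻¹ * a * b⁻¹ := by rw [hb3]; group
    _ = b * (a * b⁻¹) * b⁻¹ * (a * b⁻¹) := by group

theorem isSolvable_closure_pair_of_mul_mul_eq_one {x y z : G} (h : x * y * z = 1)
    (hx : x ^ 2 = 1 ∨ x ^ 3 = 1) (hy : y ^ 2 = 1 ∨ y ^ 3 = 1) (hz : z ^ 2 = 1 ∨ z ^ 3 = 1) :
    Group.IsSolvable (closure {x, y}) := by
  have rotate {x y z : G} (h : x * y * z = 1) : y * z * x = 1 := calc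
    _ = x⁻¹ * (x * y * z) * x := by group
    _ = 1 := by rw [h]; group
  have pow_three_mul {x y z : G} (h : x * y * z = 1) (hz : z ^ 3 = 1) : (x * y) ^ 3 = 1 := by
    rw [eq_inv_of_mul_eq_one_left h, inv_pow, hz, inv_one]
  have of_sq {x y z : G} (h : x * y * z = 1) (hx : x ^ 2 = 1) (hy : y ^ 2 = 1 ∨ y ^ 3 = 1)
      (hz : z ^ 2 = 1 ∨ z ^ 3 = 1) : Group.IsSolvable (closure {x, y}) := by
    rcases hy with hy | hy
    · exact isSolvable_closure_pair_of_sq_eq_one hx hy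
    rcases hz with hz | hz
    · rw [← closure_pair_rotate h, ← closure_pair_rotate (rotate h)]
      exact isSolvable_closure_pair_of_sq_eq_one hz hx
    · exact isSolvable_closure_pair_of_sq_of_pow_three hx hy (pow_three_mul h hz)
  rcases hx with hx | hx
  · exact of_sq h hx hy hz
  rcases hy with hy | hy
  · rw [← closure_pair_rotate h]
    exact of_sq (rotate h) hy hz (.inr hx)
  rcases hz with hz | hz
  · rw [← closure_pair_rotate h, ← closure_pair_rotate (rotate h)]
    exact of_sq (rotate (rotate h)) hz (.inr hx) (.inr hy)
  · exact isSolvable_closure_pair_of_pow_three hx hy (pow_three_mul h hz)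

theorem isSolvable_closure_mul_mul_of_sq_eq_one {g h k : G} (hg : g ^ 2 = 1) (hh : h ^ 2 = 1)
    (hk : k ^ 2 = 1) (hgh : (g * h) ^ 2 = 1 ∨ (g * h) ^ 3 = 1)
    (hgk : (g * k) ^ 2 = 1 ∨ (g * k) ^ 3 = 1) (hhk : (h * k) ^ 2 = 1 ∨ (h * k) ^ 3 = 1) :
    Group.IsSolvable (closure {g * h, g * k}) := by
  have hhg : h * g = (g * h)⁻¹ := by
    rw [mul_inv_rev, inv_eq_self_of_sq_eq_one hg, inv_eq_self_of_sq_eq_one hh]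
  have hkh : k * h = (h * k)⁻¹ := by
    rw [mul_inv_rev, inv_eq_self_of_sq_eq_one hh, inv_eq_self_of_sq_eq_one hk]
  have hinv {x : G} (hx : x ^ 2 = 1 ∨ x ^ 3 = 1) : x⁻¹ ^ 2 = 1 ∨ x⁻¹ ^ 3 = 1 := by
    simpa only [inv_pow, inv_eq_one] using hx
  rw [← closure_pair_inv_left, ← hhg]
  refine isSolvable_closure_pair_of_mul_mul_eq_one (z := k * h) ?_ (hhg ▸ hinv hgh) hgk
    (hkh ▸ hinv hhk)
  calc h * g * (g * k) * (k * h) = h * (g * g) * (k * k) * h := by group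
    _ = 1 := by rw [← sq g, ← sq k, hg, hk, mul_one, mul_one, ← sq h, hh]

end Subgroup

end GroupTheory

namespace Matrix

variable {l R : Type*} [DecidableEq l] [Fintype l] [CommRing R]

theorem isAlt_toBilin'_J : (J l R).toBilin'.IsAlt := by
  intro v
  simp [toBilin'_apply', J, dotProduct, mulVec, fromBlocks, Fintype.sum_sum_type, one_apply,
    mul_comm]

end Matrix

namespace SymplecticGroup

open Matrix

variable {l R : Type*} [DecidableEq l] [Fintype l] [CommRing R]

theorem mem_iff_toBilin' {A : Matrix (l ⊕ l) (l ⊕ l) R} :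
    A ∈ symplecticGroup l R ↔ ∀ v w, (J l R).toBilin' (A *ᵥ v) (A *ᵥ w) = (J l R).toBilin' v w := by
  rw [mem_iff', ← toBilin'.injective.eq_iff, ← toBilin'_comp, LinearMap.BilinForm.ext_iff]
  rfl

theorem one_add_vecMulVec_mulVec (v w : l ⊕ l → R) :
    (1 + vecMulVec v (v ᵥ* J l R)) *ᵥ w = w + (J l R).toBilin' v w • v := by
  rw [add_mulVec, one_mulVec, vecMulVec_mulVec, toBilin'_apply', dotProduct_mulVec,
    op_smul_eq_smul]

theorem one_add_vecMulVec_mem (v : l ⊕ l → R) :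
    1 + vecMulVec v (v ᵥ* J l R) ∈ symplecticGroup l R := by
  have hJ := isAlt_toBilin'_J (l := l) (R := R)
  refine mem_iff_toBilin'.mpr fun u w => ?_
  simp only [one_add_vecMulVec_mulVec, map_add, map_smul, LinearMap.add_apply,
    LinearMap.smul_apply, smul_eq_mul, hJ.self_eq_zero, ← hJ.neg_eq v u]
  ring

def transvection (v : l ⊕ l → R) : symplecticGroup l R :=
  ⟨1 + vecMulVec v (v ᵥ* J l R), one_add_vecMulVec_mem v⟩

theorem transvection_mulVec (v w : l ⊕ l → R) :
    (transvection v : Matrix (l ⊕ l) (l ⊕ l) R) *ᵥ w = w + (J l R).toBilin' v w • v :=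
  one_add_vecMulVec_mulVec v w

theorem ext_mulVec {A B : symplecticGroup l R}
    (h : ∀ w, (A : Matrix (l ⊕ l) (l ⊕ l) R) *ᵥ w = (B : Matrix (l ⊕ l) (l ⊕ l) R) *ᵥ w) :
    A = B :=
  Subtype.ext (ext_iff_mulVec.mpr h)

theorem mul_transvection_mul_inv (x : symplecticGroup l R) (v : l ⊕ l → R) :
    x * transvection v * x⁻¹ = transvection ((x : Matrix (l ⊕ l) (l ⊕ l) R) *ᵥ v) := by
  rw [mul_inv_eq_iff_eq_mul]
  refine ext_mulVec fun w => ?_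
  simp only [Submonoid.coe_mul, ← mulVec_mulVec, transvection_mulVec, mulVec_add, mulVec_smul,
    mem_iff_toBilin'.mp x.2]

theorem transvection_ne_one [NoZeroDivisors R] {v : l ⊕ l → R} (hv : v ≠ 0) :
    transvection v ≠ 1 := by
  obtain ⟨i, hi⟩ := Function.ne_iff.mp hv
  intro h
  have hw : (J l R).toBilin' v (-(J l R *ᵥ Pi.single i 1)) = v i := by
    rw [toBilin'_apply', mulVec_neg, mulVec_mulVec, J_squared, neg_mulVec, one_mulVec, neg_neg,
      dotProduct_single, mul_one]
  have := transvection_mulVec v (-(J l R *ᵥ Pi.single i 1))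
  rw [h, hw, Submonoid.coe_one, one_mulVec, left_eq_add] at this
  exact hi (mul_self_eq_zero.mp (congrFun this i))

section CharTwo

variable [CharP R 2]

theorem transvection_sq (v : l ⊕ l → R) : transvection v ^ 2 = 1 := by
  refine ext_mulVec fun w => ?_
  have hJ := isAlt_toBilin'_J (l := l) (R := R)
  simp only [sq, Submonoid.coe_mul, ← mulVec_mulVec, transvection_mulVec, map_add, map_smul,
    smul_eq_mul, hJ.self_eq_zero, mul_zero, add_zero, Submonoid.coe_one,
    one_mulVec]
  rw [add_assoc, ← add_smul, CharTwo.add_self_eq_zero, zero_smul, add_zero]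

theorem inv_transvection (v : l ⊕ l → R) : (transvection v)⁻¹ = transvection v :=
  inv_eq_self_of_sq_eq_one (transvection_sq v)

theorem transvection_mul_transvection_sq {v w : l ⊕ l → R} (h : (J l R).toBilin' v w = 0) :
    (transvection v * transvection w) ^ 2 = 1 := by
  have hc : Commute (transvection v) (transvection w) := by
    rw [commute_iff_eq, ← mul_inv_eq_iff_eq_mul, mul_transvection_mul_inv, transvection_mulVec, h,
      zero_smul, add_zero]
  rw [hc.mul_pow, transvection_sq, transvection_sq, one_mul]

theorem transvection_mul_transvection_pow_three {v w : l ⊕ l → R}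
    (h : (J l R).toBilin' v w = 1) : (transvection v * transvection w) ^ 3 = 1 := by
  have h' : (J l R).toBilin' w v = 1 := by
    rw [← isAlt_toBilin'_J.neg_eq, h, CharTwo.neg_eq]
  have hv : transvection v * transvection w * (transvection v)⁻¹ = transvection (v + w) := by
    rw [mul_transvection_mul_inv, transvection_mulVec, h, one_smul, add_comm]
  have hw : transvection w * transvection v * (transvection w)⁻¹ = transvection (v + w) := by
    rw [mul_transvection_mul_inv, transvection_mulVec, h', one_smul]
  calc (transvection v * transvection w) ^ 3
      = transvection v * transvection w * (transvection v)⁻¹ *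
          (transvection w * transvection v * (transvection w)⁻¹) := by
        rw [inv_transvection, inv_transvection, pow_three']; group
    _ = 1 := by rw [hv, hw, ← sq, transvection_sq]

theorem commutatorElement_transvection (v : l ⊕ l → R) (x : symplecticGroup l R) :
    ⁅transvection v, x⁆ = transvection v * transvection ((x : Matrix (l ⊕ l) (l ⊕ l) R) *ᵥ v) := by
  rw [commutatorElement_def, ← mul_transvection_mul_inv, inv_transvection]
  group

end CharTwo

theorem transvection_mul_transvection_sq_or_pow_three (v w : l ⊕ l → ZMod 2) :
    (transvection v * transvection w) ^ 2 = 1 ∨ (transvection v * transvection w) ^ 3 = 1 := by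
  rcases (by decide : ∀ c : ZMod 2, c = 0 ∨ c = 1) ((J l (ZMod 2)).toBilin' v w) with h | h
  · exact .inl (transvection_mul_transvection_sq h)
  · exact .inr (transvection_mul_transvection_pow_three h)

theorem isSolvable_closure_commutatorElement_transvection (v : l ⊕ l → ZMod 2)
    (x y : symplecticGroup l (ZMod 2)) :
    Group.IsSolvable (Subgroup.closure {⁅transvection v, x⁆, ⁅transvection v, y⁆}) := by
  rw [commutatorElement_transvection, commutatorElement_transvection]
  exact Subgroup.isSolvable_closure_mul_mul_of_sq_eq_one (transvection_sq _) (transvection_sq _)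
    (transvection_sq _) (transvection_mul_transvection_sq_or_pow_three _ _)
    (transvection_mul_transvection_sq_or_pow_three _ _)
    (transvection_mul_transvection_sq_or_pow_three _ _)

end SymplecticGroup

/-- The symplectic group `Sp(2n, 2)` over `ZMod 2`, with `n ≥ 2`, contains a
nontrivial 2-radical element: some `g ≠ 1` such that for all `x, y` the subgroup
generated by `⁅g,x⁆` and `⁅g,y⁆` is solvable. -/
theorem symplecticGroup_has_two_radical (n : ℕ) (hn : 2 ≤ n) :
    ∃ g : Matrix.symplecticGroup (Fin n) (ZMod 2), g ≠ 1 ∧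
      ∀ x y : Matrix.symplecticGroup (Fin n) (ZMod 2),
        IsSolvable (Subgroup.closure
          ({@Bracket.bracket _ _ commutatorElement g x, @Bracket.bracket _ _ commutatorElement g y} : Set (Matrix.symplecticGroup (Fin n) (ZMod 2)))) :=
  ⟨SymplecticGroup.transvection (Pi.single (Sum.inl ⟨0, by omega⟩) 1),
    SymplecticGroup.transvection_ne_one (by simp),
    SymplecticGroup.isSolvable_closure_commutatorElement_transvection _⟩
end

section
/- Let m ≥ 2 be an integer and set q² = 2^(2m+1). Then there exists a prime p with p ≠ 2, p ≠ 3, p coprime to q² − 1, and such that p divides q² + 1 or p divides q⁴ + 1; that is, there is a prime p ∉ {2, 3} with gcd(p, 2^(2m+1) − 1) = 1 and p ∣ 2^(2m+1) + 1 or p ∣ 2^(4m+2) + 1. -/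
/-!
Take any prime factor `p` of `x² + 1` with `x = 2^(2m+1)`. It is odd because `x` is even, it is
not `3` because `-1` is not a square mod `3`, and it cannot divide `x - 1`: modulo such a `p`
we would have `x² + 1 ≡ 2`, forcing `p = 2`.
-/

theorem Nat.Prime.eq_two_of_dvd_sq_add_one_of_dvd_sub_one {p x : ℕ} (hp : p.Prime)
    (h₁ : p ∣ x ^ 2 + 1) (h₂ : p ∣ x - 1) : p = 2 := by
  refine (Nat.prime_dvd_prime_iff_eq hp Nat.prime_two).1 ?_
  rcases Nat.eq_zero_or_pos x with rfl | hx
  · exact absurd h₁ hp.not_dvd_one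
  · have hx₁ : 1 ≡ x [MOD p] := (Nat.modEq_iff_dvd' hx).2 h₂
    have : 2 ≡ x ^ 2 + 1 [MOD p] := by simpa using (hx₁.pow 2).add_right 1
    exact Nat.modEq_zero_iff_dvd.1 (this.trans (Nat.modEq_zero_iff_dvd.2 h₁))

theorem not_three_dvd_sq_add_one (x : ℕ) : ¬ 3 ∣ x ^ 2 + 1 := by
  rw [← ZMod.natCast_eq_zero_iff]
  push_cast
  generalize (x : ZMod 3) = y
  revert y
  decide

theorem exists_prime_dvd_sq_add_one_coprime_sub_one {x : ℕ} (hx : Even x) (hx₀ : x ≠ 0) :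
    ∃ p, p.Prime ∧ p ≠ 2 ∧ p ≠ 3 ∧ p.Coprime (x - 1) ∧ p ∣ x ^ 2 + 1 := by
  have hodd : Odd (x ^ 2 + 1) := (hx.pow_of_ne_zero two_ne_zero).add_one
  set p := (x ^ 2 + 1).minFac
  have hp : p.Prime := Nat.minFac_prime (by simpa using hx₀)
  have hdvd : p ∣ x ^ 2 + 1 := Nat.minFac_dvd _
  have hp₂ : p ≠ 2 := by
    intro h
    exact hodd.not_two_dvd_nat (h ▸ hdvd)
  refine ⟨p, hp, hp₂, ?_, ?_, hdvd⟩
  · intro h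
    exact not_three_dvd_sq_add_one x (h ▸ hdvd)
  · exact (Nat.Prime.coprime_iff_not_dvd hp).2
      fun h ↦ hp₂ (hp.eq_two_of_dvd_sq_add_one_of_dvd_sub_one hdvd h)

theorem exists_prime_for_suzuki_ree_general (m : ℕ) :
    ∃ p : ℕ, Nat.Prime p ∧ p ≠ 2 ∧ p ≠ 3 ∧
      Nat.Coprime p (2 ^ (2 * m + 1) - 1) ∧
      (p ∣ 2 ^ (2 * m + 1) + 1 ∨ p ∣ 2 ^ (4 * m + 2) + 1) := by
  obtain ⟨p, hp, hp₂, hp₃, hcop, hdvd⟩ := exists_prime_dvd_sq_add_one_coprime_sub_one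
    (x := 2 ^ (2 * m + 1)) ((Nat.even_pow' (by omega)).2 even_two) (by positivity)
  refine ⟨p, hp, hp₂, hp₃, hcop, Or.inr ?_⟩
  rwa [← pow_mul, show (2 * m + 1) * 2 = 4 * m + 2 by ring] at hdvd

/-- For `m ≥ 2` and `q² = 2^(2m+1)`: there exists a prime `p ∉ {2, 3}` coprime to
`q² − 1 = 2^(2m+1) − 1` such that `p ∣ q² + 1 = 2^(2m+1) + 1` or
`p ∣ q⁴ + 1 = 2^(4m+2) + 1`. -/
theorem exists_prime_for_suzuki_ree (m : ℕ) (hm : 2 ≤ m) :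
    ∃ p : ℕ, Nat.Prime p ∧ p ≠ 2 ∧ p ≠ 3 ∧
      Nat.Coprime p (2 ^ (2 * m + 1) - 1) ∧
      (p ∣ 2 ^ (2 * m + 1) + 1 ∨ p ∣ 2 ^ (4 * m + 2) + 1) :=
  exists_prime_for_suzuki_ree_general m
end

section
/- Let F be a finite field, G = SL(2, F), and let T be the subgroup of diagonal matrices of G (a quasisplit maximal torus). Let S be a subgroup of G contained in T such that the centralizer of S in G equals T. Then the normalizer of S in G equals the normalizer of T in G. -/
/-!
The centralizer of `S` is normal in the normalizer of `S`, so `N(S) ≤ N(C(S)) = N(T)`.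
Conversely, if `g` normalizes `T` and `s = diag(a, a⁻¹)` lies in `S`, then `g s g⁻¹` is diagonal
with the same trace as `s`, hence equal to `diag(a, a⁻¹) = s` or `diag(a⁻¹, a) = s⁻¹`; either way
it lies in `S`.
-/

/-- The subgroup of diagonal matrices of `SL(2, F)` (a quasisplit maximal torus). -/
def diagonalTorusSL2 (F : Type*) [Field F] : Subgroup (Matrix.SpecialLinearGroup (Fin 2) F) where
  carrier := {g | (g : Matrix (Fin 2) (Fin 2) F) 0 1 = 0 ∧
    (g : Matrix (Fin 2) (Fin 2) F) 1 0 = 0}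
  one_mem' := by
    constructor <;> simp [Matrix.SpecialLinearGroup.coe_one]
  mul_mem' := by
    rintro a b ⟨ha01, ha10⟩ ⟨hb01, hb10⟩
    constructor <;>
      simp_all [Matrix.SpecialLinearGroup.coe_mul, Matrix.mul_apply, Fin.sum_univ_two]
  inv_mem' := by
    rintro a ⟨ha01, ha10⟩
    constructor <;>
      simp_all [Matrix.SpecialLinearGroup.coe_inv, Matrix.adjugate_fin_two]

open Matrix Subgroup
open scoped MatrixGroups

theorem Subgroup.normalizer_le_normalizer_centralizer {G : Type*} [Group G] (s : Set G) :
    normalizer s ≤ normalizer (centralizer s : Set G) :=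
  le_normalizer_of_normal_subgroupOf (centralizer_le_normalizer s)

theorem Matrix.SpecialLinearGroup.trace_conj {n R : Type*} [Fintype n] [DecidableEq n]
    [CommRing R] (g s : SpecialLinearGroup n R) : trace (g * s * g⁻¹).1 = trace s.1 := by
  simp only [SpecialLinearGroup.coe_mul]
  rw [trace_mul_cycle, ← SpecialLinearGroup.coe_mul, inv_mul_cancel, SpecialLinearGroup.coe_one,
    Matrix.one_mul]

namespace diagonalTorusSL2

variable {F : Type*} [Field F]

lemma diag_mul_eq_one {s : SL(2, F)} (hs : s ∈ diagonalTorusSL2 F) : s.1 0 0 * s.1 1 1 = 1 := by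
  have hdet := s.det_coe
  rwa [det_fin_two, hs.1, hs.2, mul_zero, sub_zero] at hdet

lemma eq_or_eq_inv_of_trace_eq {s c : SL(2, F)} (hs : s ∈ diagonalTorusSL2 F)
    (hc : c ∈ diagonalTorusSL2 F) (htr : trace c.1 = trace s.1) : c = s ∨ c = s⁻¹ := by
  rw [trace_fin_two, trace_fin_two] at htr
  -- `c 0 0` is a root of `X ^ 2 - trace s * X + 1`, whose roots are the diagonal entries of `s`
  have hroot : (c.1 0 0 - s.1 0 0) * (c.1 0 0 - s.1 1 1) = 0 := by
    linear_combination diag_mul_eq_one hs - diag_mul_eq_one hc + c.1 0 0 * htr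
  rcases mul_eq_zero.mp hroot with h | h
  · have h00 : c.1 0 0 = s.1 0 0 := sub_eq_zero.mp h
    have h11 : c.1 1 1 = s.1 1 1 := by linear_combination htr - h00
    left
    ext i j
    fin_cases i <;> fin_cases j <;> simp [hs.1, hs.2, hc.1, hc.2, h00, h11]
  · have h00 : c.1 0 0 = s.1 1 1 := sub_eq_zero.mp h
    have h11 : c.1 1 1 = s.1 0 0 := by linear_combination htr - h00
    right
    ext i j
    fin_cases i <;> fin_cases j <;> simp [adjugate_fin_two, hs.1, hs.2, hc.1, hc.2, h00, h11]

theorem normalizer_le_normalizer_of_le {S : Subgroup SL(2, F)} (hST : S ≤ diagonalTorusSL2 F) :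
    normalizer (diagonalTorusSL2 F : Set SL(2, F)) ≤ normalizer (S : Set SL(2, F)) := by
  rw [le_normalizer_iff]
  intro g hg s hs
  have hconj : g * s * g⁻¹ ∈ diagonalTorusSL2 F := (mem_normalizer_iff.mp hg s).mp (hST hs)
  rcases eq_or_eq_inv_of_trace_eq (hST hs) hconj (SpecialLinearGroup.trace_conj g s) with h | h
  · rwa [h]
  · rw [h]
    exact S.inv_mem hs

end diagonalTorusSL2

theorem SL2_normalizer_eq_normalizer_torus_general {F : Type*} [Field F]
    (S : Subgroup (Matrix.SpecialLinearGroup (Fin 2) F))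
    (hST : S ≤ diagonalTorusSL2 F)
    (hcent : Subgroup.centralizer (S : Set (Matrix.SpecialLinearGroup (Fin 2) F)) =
      diagonalTorusSL2 F) :
    Subgroup.normalizer (S : Set (Matrix.SpecialLinearGroup (Fin 2) F)) =
      Subgroup.normalizer (diagonalTorusSL2 F : Set (Matrix.SpecialLinearGroup (Fin 2) F)) := by
  refine le_antisymm ?_ (diagonalTorusSL2.normalizer_le_normalizer_of_le hST)
  rw [← hcent]
  exact normalizer_le_normalizer_centralizer _

/-- If `S ≤ T` is a subgroup of the diagonal torus `T` of `SL(2, F)` whose centralizer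
in `SL(2, F)` equals `T`, then the normalizer of `S` equals the normalizer of `T`. -/
theorem SL2_normalizer_eq_normalizer_torus {F : Type*} [Field F] [Fintype F]
    (S : Subgroup (Matrix.SpecialLinearGroup (Fin 2) F))
    (hST : S ≤ diagonalTorusSL2 F)
    (hcent : Subgroup.centralizer (S : Set (Matrix.SpecialLinearGroup (Fin 2) F)) =
      diagonalTorusSL2 F) :
    Subgroup.normalizer (S : Set (Matrix.SpecialLinearGroup (Fin 2) F)) =
      Subgroup.normalizer (diagonalTorusSL2 F : Set (Matrix.SpecialLinearGroup (Fin 2) F)) :=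
  SL2_normalizer_eq_normalizer_torus_general S hST hcent
end

section
/- The projective general linear group PGL(2, F₅) = GL(2, F₅)/Z(GL(2, F₅)) contains a nontrivial 2-radical element: there exists an element g ≠ 1 of the quotient of GL(2, ZMod 5) by its center such that for all x, y in this quotient group, the subgroup generated by the commutators ⁅g,x⁆ and ⁅g,y⁆ is solvable. (This is the exceptional case κ(PGL₂(5)) = 3 of the proposition on extensions of rank-one groups by diagonal automorphisms; it reflects the isomorphism PGL₂(5) ≅ S₅.) -/
/-!
Take `w = !![0, 2; 1, 0]`. Since `w ^ 2 = 2` is scalar and `det w = 3` is not a square mod 5,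
the image of `w` in `PGL₂(5) ≅ S₅` is a transposition.

Write `⁅w, X⁆ = w * (X * w⁻¹ * X⁻¹)`. The conjugates of `w⁻¹` are among the twenty trace-zero
matrices of determinant `2`, so the commutators `⁅w, X⁆` take at most twenty values in
`GL₂(5)`. For any two of them `u, v` a finite check finds a `p`-subgroup `P` of `SL₂(5)` (one of
three quaternion groups or four groups of order `3`) normalised by `u` and `v` and containing
`⁅u, v⁆`. Then `⁅⟨u, v⟩, ⟨u, v⟩⁆ ≤ P` is a `p`-group, so `⟨u, v⟩` is solvable, and so is its
image in `PGL₂(5)`.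
-/

open scoped commutatorElement

open Subgroup

section Solvable

variable {G : Type*} [Group G]

theorem Subgroup.commutator_closure_pair_le {P : Subgroup G} {u v : G}
    (hu : u ∈ normalizer (P : Set G)) (hv : v ∈ normalizer (P : Set G)) (huv : ⁅u, v⁆ ∈ P) :
    ⁅closure {u, v}, closure {u, v}⁆ ≤ P := by
  have conj : ∀ g ∈ closure {u, v}, ∀ h ∈ P, g * h * g⁻¹ ∈ P := fun g hg h hh =>
    (mem_normalizer_iff.1 (closure_le _ |>.2 (Set.pair_subset hu hv) hg) h).1 hh
  rw [commutator_le]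
  intro x hx y hy
  induction hx, hy using closure_induction₂ with
  | mem x y hx hy =>
    rcases hx with rfl | rfl <;> rcases hy with rfl | rfl
    · simp
    · exact huv
    · rw [← commutatorElement_inv]
      exact P.inv_mem huv
    · simp
  | one_left => simp
  | one_right => simp
  | mul_left x₁ x₂ y hx₁ _ _ h₁ h₂ =>
    rw [commutatorElement_mul_left_eq_conj_mul]
    exact P.mul_mem (conj _ hx₁ _ h₂) h₁
  | mul_right y₁ y₂ x hy₁ _ _ h₁ h₂ =>
    simpa only [commutatorElement_mul_right_eq_mul_conj, mul_assoc] using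
      P.mul_mem h₁ (conj _ hy₁ _ h₂)
  | inv_left x y hx _ h =>
    rw [commutatorElement_inv_left, ← commutatorElement_inv]
    simpa only [inv_inv] using conj _ (inv_mem hx) _ (P.inv_mem h)
  | inv_right x y _ hy h =>
    rw [commutatorElement_inv_right, ← commutatorElement_inv]
    simpa only [inv_inv] using conj _ (inv_mem hy) _ (P.inv_mem h)

theorem isSolvable_of_commutator_le_of_isPGroup {p : ℕ} [Fact p.Prime] {H P : Subgroup G}
    [Finite P] (hP : IsPGroup p P) (hHP : ⁅H, H⁆ ≤ P) : Group.IsSolvable H := by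
  have hmem : ∀ x : commutator H, ((x : H) : G) ∈ P := fun x =>
    hHP (map_subtype_commutator H ▸ mem_map_of_mem H.subtype x.2)
  let f : commutator H →* P := (H.subtype.comp (commutator H).subtype).codRestrict P hmem
  have hf : Function.Injective f := fun x y hxy =>
    Subtype.ext (Subtype.ext (congrArg (fun z : P => (z : G)) hxy))
  have := hP.isNilpotent
  have := Group.isSolvable_of_isSolvable_injective hf
  have : IsMulCommutative (H ⧸ commutator H) :=
    Subgroup.Normal.quotient_commutative_iff_commutator_le.2 le_rfl
  exact (Group.isSolvable_iff_subgroup_quotient (commutator H)).2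
    ⟨inferInstance, Group.isSolvable_of_comm fun a b => mul_comm' a b⟩

theorem Group.IsSolvable.closure_image {S : Set G} (hS : Group.IsSolvable (closure S))
    {G' : Type*} [Group G'] (f : G →* G') : Group.IsSolvable (closure (f '' S)) :=
  MonoidHom.map_closure f S ▸ Group.isSolvable_of_surjective (f.subgroupMap_surjective _)

end Solvable

namespace List

variable {M : Type*} [Monoid M]

def IsGroup (L : List M) : Prop :=
  1 ∈ L ∧ (∀ a ∈ L, ∀ b ∈ L, a * b ∈ L) ∧ ∀ a ∈ L, ∃ b ∈ L, a * b = 1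

/-- `u` and `v` normalise `L` and their commutator lies in `L`, stated without inverses. -/
def CommuteModulo (L : List M) (u v : M) : Prop :=
  (∀ x ∈ L, ∃ y ∈ L, u * x = y * u) ∧ (∀ x ∈ L, ∃ y ∈ L, v * x = y * v) ∧
    ∃ y ∈ L, u * v = y * v * u

instance [DecidableEq M] (L : List M) : Decidable L.IsGroup :=
  inferInstanceAs (Decidable (_ ∧ _ ∧ _))

instance [DecidableEq M] (L : List M) (u v : M) : Decidable (L.CommuteModulo u v) :=
  inferInstanceAs (Decidable (_ ∧ _ ∧ _))

namespace IsGroup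

variable {L : List M}

def unitsSubgroup (hL : L.IsGroup) : Subgroup Mˣ where
  carrier := {u | (u : M) ∈ L}
  one_mem' := hL.1
  mul_mem' ha hb := hL.2.1 _ ha _ hb
  inv_mem' {u} hu := by
    obtain ⟨b, hb, hub⟩ := hL.2.2 _ hu
    exact (Units.inv_eq_of_mul_eq_one_right hub ▸ hb : ((u⁻¹ : Mˣ) : M) ∈ L)

theorem isPGroup (hL : L.IsGroup) {p k : ℕ} (hexp : ∀ x ∈ L, x ^ p ^ k = 1) :
    IsPGroup p hL.unitsSubgroup :=
  fun x => ⟨k, Subtype.ext (Units.ext (by simpa using hexp _ x.2))⟩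

theorem mem_normalizer [Finite Mˣ] (hL : L.IsGroup) {u : Mˣ}
    (hu : ∀ x ∈ L, ∃ y ∈ L, ↑u * x = y * ↑u) : u ∈ normalizer (hL.unitsSubgroup : Set Mˣ) :=
  mem_normalizer_fintype fun n hn => by
    obtain ⟨y, hy, h⟩ := hu _ hn
    have : ((u * n * u⁻¹ : Mˣ) : M) = y := by
      rw [Units.val_mul, Units.val_mul, h, mul_assoc, Units.mul_inv, mul_one]
    exact (this ▸ hy : ((u * n * u⁻¹ : Mˣ) : M) ∈ L)

theorem commutatorElement_mem (hL : L.IsGroup) {u v : Mˣ} {y : M} (hy : y ∈ L)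
    (h : ↑u * ↑v = y * ↑v * ↑u) : ⁅u, v⁆ ∈ hL.unitsSubgroup := by
  have : ((⁅u, v⁆ : Mˣ) : M) = y := by
    rw [commutatorElement_def, Units.val_mul, Units.val_mul, Units.val_mul, h,
      Units.mul_inv_cancel_right, Units.mul_inv_cancel_right]
  exact (this ▸ hy : ((⁅u, v⁆ : Mˣ) : M) ∈ L)

theorem isSolvable_closure_pair [Finite Mˣ] {p k : ℕ} [Fact p.Prime] (hL : L.IsGroup)
    (hexp : ∀ x ∈ L, x ^ p ^ k = 1) {u v : Mˣ} (h : L.CommuteModulo u v) :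
    Group.IsSolvable (closure {u, v}) :=
  have ⟨hu, hv, _, hy, huv⟩ := h
  isSolvable_of_commutator_le_of_isPGroup (hL.isPGroup hexp)
    (commutator_closure_pair_le (hL.mem_normalizer hu) (hL.mem_normalizer hv)
      (hL.commutatorElement_mem hy huv))

end IsGroup

end List

namespace PGL2F5

local notation "M₂" => Matrix (Fin 2) (Fin 2) (ZMod 5)

local notation "GL₂" => Matrix.GeneralLinearGroup (Fin 2) (ZMod 5)

def w : GL₂ := ⟨!![0, 2; 1, 0], !![0, 1; 3, 0], by decide, by decide⟩

theorem w_not_mem_center : w ∉ center GL₂ := fun hw => by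
  have := congrArg Units.val
    (mem_center_iff.1 hw ⟨!![1, 1; 0, 1], !![1, 4; 0, 1], by decide, by decide⟩)
  revert this
  decide

theorem conj_w_inv_eq (X : GL₂) :
    ∃ a b c : ZMod 5, a * a + b * c = -2 ∧ ((X * w⁻¹ * X⁻¹ : GL₂) : M₂) = !![a, b; c, -a] := by
  have htr : Matrix.trace ((X * w⁻¹ * X⁻¹ : GL₂) : M₂) = 0 := by
    rw [Units.val_mul, Units.val_mul, Matrix.trace_units_conj]
    decide
  have hdet : Matrix.det ((X * w⁻¹ * X⁻¹ : GL₂) : M₂) = 2 := by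
    rw [Units.val_mul, Units.val_mul, Matrix.det_units_conj]
    decide
  generalize ((X * w⁻¹ * X⁻¹ : GL₂) : M₂) = N at htr hdet ⊢
  rw [Matrix.trace_fin_two] at htr
  rw [Matrix.det_fin_two] at hdet
  refine ⟨N 0 0, N 0 1, N 1 0, by linear_combination N 0 0 * htr - hdet, ?_⟩
  conv_lhs => rw [Matrix.eta_fin_two N]
  rw [eq_neg_of_add_eq_zero_right htr]

def quaternionList (i j : M₂) : List M₂ :=
  [1, i, i ^ 2, i ^ 3, j, i * j, i ^ 2 * j, i ^ 3 * j]

/-- The Sylow subgroups of `SL₂(5)` that are needed: in `PGL₂(5) ≅ S₅`, with `w` the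
transposition `(1 2)`, they lie over the three Klein four-groups of the `A₄`s fixing one of
`3, 4, 5` and over the four subgroups generated by `(3 4 5)` and by `(1 2 k)`. -/
def pSubgroupCerts : List (ℕ × List M₂) :=
  [(2, quaternionList !![0, 1; 4, 0] !![2, 0; 0, 3]),
   (2, quaternionList !![1, 2; 4, 4] !![2, 4; 0, 3]),
   (2, quaternionList !![4, 2; 4, 1] !![2, 1; 0, 3]),
   (3, [1, !![2, 1; 3, 2], !![2, 1; 3, 2] ^ 2]),
   (3, [1, !![1, 4; 3, 3], !![1, 4; 3, 3] ^ 2]),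
   (3, [1, !![2, 2; 4, 2], !![2, 2; 4, 2] ^ 2]),
   (3, [1, !![1, 1; 2, 3], !![1, 1; 2, 3] ^ 2])]

theorem pSubgroupCerts_valid :
    ∀ c ∈ pSubgroupCerts, c.1.Prime ∧ c.2.IsGroup ∧ ∀ x ∈ c.2, x ^ c.1 ^ 2 = 1 := by
  decide +kernel

theorem exists_commuteModulo :
    ∀ a₁ b₁ c₁ : ZMod 5, a₁ * a₁ + b₁ * c₁ = -2 → ∀ a₂ b₂ c₂ : ZMod 5, a₂ * a₂ + b₂ * c₂ = -2 →
      ∃ c ∈ pSubgroupCerts,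
        c.2.CommuteModulo ((w : M₂) * !![a₁, b₁; c₁, -a₁]) ((w : M₂) * !![a₂, b₂; c₂, -a₂]) := by
  decide +kernel

theorem isSolvable_closure_commutator_w (X Y : GL₂) :
    Group.IsSolvable (Subgroup.closure {⁅w, X⁆, ⁅w, Y⁆}) := by
  have hval (Z : GL₂) : ((⁅w, Z⁆ : GL₂) : M₂) = w * ((Z * w⁻¹ * Z⁻¹ : GL₂) : M₂) := by
    simp only [commutatorElement_def, Units.val_mul, mul_assoc]
  obtain ⟨a₁, b₁, c₁, h₁, hX⟩ := conj_w_inv_eq X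
  obtain ⟨a₂, b₂, c₂, h₂, hY⟩ := conj_w_inv_eq Y
  obtain ⟨⟨p, L⟩, hc, hcomm⟩ := exists_commuteModulo a₁ b₁ c₁ h₁ a₂ b₂ c₂ h₂
  obtain ⟨hp, hL, hexp⟩ := pSubgroupCerts_valid _ hc
  have : Fact p.Prime := ⟨hp⟩
  exact hL.isSolvable_closure_pair (u := ⁅w, X⁆) (v := ⁅w, Y⁆) hexp
    (by rwa [hval, hval, hX, hY])

end PGL2F5

open PGL2F5 in
/-- `PGL(2, F₅) = GL(2, F₅)/Z(GL(2, F₅))` contains a nontrivial 2-radical element: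
some `g ≠ 1` such that for all `x, y` the subgroup generated by `⁅g,x⁆` and `⁅g,y⁆`
is solvable (reflecting `PGL₂(5) ≅ S₅`). -/
theorem PGL2_F5_has_two_radical :
    ∃ g : Matrix.GeneralLinearGroup (Fin 2) (ZMod 5) ⧸
        Subgroup.center (Matrix.GeneralLinearGroup (Fin 2) (ZMod 5)), g ≠ 1 ∧
      ∀ x y : Matrix.GeneralLinearGroup (Fin 2) (ZMod 5) ⧸
          Subgroup.center (Matrix.GeneralLinearGroup (Fin 2) (ZMod 5)),
        IsSolvable (Subgroup.closure
          ({⁅g, x⁆, ⁅g, y⁆} : Set (Matrix.GeneralLinearGroup (Fin 2) (ZMod 5) ⧸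
            Subgroup.center (Matrix.GeneralLinearGroup (Fin 2) (ZMod 5))))) := by
  refine ⟨w, (QuotientGroup.eq_one_iff w).not.2 w_not_mem_center, fun x y => ?_⟩
  induction x using QuotientGroup.induction_on with | H X =>
  induction y using QuotientGroup.induction_on with | H Y =>
  have := (isSolvable_closure_commutator_w X Y).closure_image (QuotientGroup.mk' (center _))
  rwa [Set.image_pair, map_commutatorElement, map_commutatorElement] at this
end
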